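/- arXiv:2402.15892 — 14 statements merged into one kernel-verified Lean document; each statement's English description precedes it below -/
import Mathlib

section
/- Define f : (0,1) → ℝ by f(P) = P·log(2P/(1+P)) + ((1−P)/2)·log((1−P)/(1+P)). Then f attains a strict global minimum on (0,1) at P* = 1/√5; that is, f(1/√5) < f(P) for every P ∈ (0,1) with P ≠ 1/√5. Moreover the corresponding optimal splitting ratio 2P*/(1+P*) equals (√5 − 1)/2, the reciprocal of the golden ratio. -/
/-!
The derivative of `f` on `(0,1)` is `log (4P² / (1 - P²)) / 2`, which is negative for `5P² < 1`
and positive for `5P² > 1`; so `f` strictly decreases up to `1/√5` and strictly increases after.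
-/

open Real Set

theorem lt_apply_of_hasDerivAt_neg_of_pos {f f' : ℝ → ℝ} {a b c : ℝ} (hc : c ∈ Ioo a b)
    (hf : ∀ x ∈ Ioo a b, HasDerivAt f (f' x) x) (hneg : ∀ x ∈ Ioo a c, f' x < 0)
    (hpos : ∀ x ∈ Ioo c b, 0 < f' x) {x : ℝ} (hx : x ∈ Ioo a b) (hxc : x ≠ c) :
    f c < f x := by
  have hcont : ContinuousOn f (Ioo a b) := fun y hy => (hf y hy).continuousAt.continuousWithinAt
  have hanti : StrictAntiOn f (Ioc a c) := by
    refine strictAntiOn_of_deriv_neg (convex_Ioc a c)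
      (hcont.mono fun y hy => ⟨hy.1, hy.2.trans_lt hc.2⟩) fun y hy => ?_
    rw [interior_Ioc] at hy
    rw [(hf y ⟨hy.1, hy.2.trans hc.2⟩).deriv]
    exact hneg y hy
  have hmono : StrictMonoOn f (Ico c b) := by
    refine strictMonoOn_of_deriv_pos (convex_Ico c b)
      (hcont.mono fun y hy => ⟨hc.1.trans_le hy.1, hy.2⟩) fun y hy => ?_
    rw [interior_Ico] at hy
    rw [(hf y ⟨hc.1.trans hy.1, hy.2⟩).deriv]
    exact hpos y hy
  rcases hxc.lt_or_gt with h | h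
  · exact hanti ⟨hx.1, h.le⟩ ⟨hc.1, le_rfl⟩ h
  · exact hmono ⟨le_rfl, hc.2⟩ ⟨h.le, hx.2⟩ h

noncomputable def growthRate (P : ℝ) : ℝ :=
  P * log (2 * P / (1 + P)) + ((1 - P) / 2) * log ((1 - P) / (1 + P))

theorem hasDerivAt_growthRate {P : ℝ} (h0 : 0 < P) (h1 : P < 1) :
    HasDerivAt growthRate (log (4 * P ^ 2 / (1 - P ^ 2)) / 2) P := by
  have hp : (1 : ℝ) + P ≠ 0 := by linarith
  have hm : (1 : ℝ) - P ≠ 0 := by linarith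
  have hm2 : (1 : ℝ) - P ^ 2 ≠ 0 := by nlinarith
  have hid := hasDerivAt_id' P
  have hA : HasDerivAt (fun x => 2 * x / (1 + x)) _ P :=
    (hid.const_mul 2).div (hid.const_add 1) hp
  have hB : HasDerivAt (fun x => (1 - x) / (1 + x)) _ P :=
    (hid.const_sub 1).div (hid.const_add 1) hp
  have h : HasDerivAt growthRate _ P := (hid.mul (hA.log (by positivity))).add
    (((hid.const_sub 1).div_const 2).mul (hB.log (div_ne_zero hm hp)))
  have hlog : log (4 * P ^ 2 / (1 - P ^ 2))
      = 2 * log (2 * P / (1 + P)) - log ((1 - P) / (1 + P)) := by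
    have hsq : 4 * P ^ 2 / (1 - P ^ 2) = (2 * P / (1 + P)) ^ 2 / ((1 - P) / (1 + P)) := by
      field_simp
      ring
    rw [hsq, log_div (by positivity) (div_ne_zero hm hp), log_pow]
    norm_num
  -- the terms `± 1 / (1 + P)` coming from the two products cancel
  refine h.congr_deriv ?_
  rw [hlog]
  field_simp
  ring

theorem one_div_sqrt_five_lt_iff {P : ℝ} (hP : 0 < P) : 1 / √5 < P ↔ 1 - P ^ 2 < 4 * P ^ 2 := by
  rw [one_div, ← sqrt_inv, sqrt_lt' hP]
  constructor <;> intro h <;> linarith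

theorem lt_one_div_sqrt_five_iff {P : ℝ} (hP : 0 < P) : P < 1 / √5 ↔ 4 * P ^ 2 < 1 - P ^ 2 := by
  rw [one_div, ← sqrt_inv, lt_sqrt hP.le]
  constructor <;> intro h <;> linarith

theorem one_div_sqrt_five_mem_Ioo : 1 / √5 ∈ Ioo (0 : ℝ) 1 := by
  refine ⟨by positivity, ?_⟩
  rw [one_div, ← sqrt_inv, sqrt_lt' one_pos]
  norm_num

theorem two_mul_one_div_sqrt_five_div : 2 * (1 / √5) / (1 + 1 / √5) = (√5 - 1) / 2 := by
  have h5 : √5 ^ 2 = 5 := sq_sqrt (by norm_num)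
  field_simp
  linear_combination -h5

theorem log_four_mul_sq_div_neg {P : ℝ} (h0 : 0 < P) (hP : P < 1 / √5) :
    log (4 * P ^ 2 / (1 - P ^ 2)) / 2 < 0 := by
  have hlt := (lt_one_div_sqrt_five_iff h0).1 hP
  have hpos : 0 < 1 - P ^ 2 := by nlinarith
  exact div_neg_of_neg_of_pos (log_neg (by positivity) ((div_lt_one hpos).2 hlt)) two_pos

theorem log_four_mul_sq_div_pos {P : ℝ} (hP : 1 / √5 < P) (h1 : P < 1) :
    0 < log (4 * P ^ 2 / (1 - P ^ 2)) / 2 := by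
  have h0 : 0 < P := one_div_sqrt_five_mem_Ioo.1.trans hP
  have hlt := (one_div_sqrt_five_lt_iff h0).1 hP
  have hpos : 0 < 1 - P ^ 2 := by nlinarith
  exact half_pos (log_pos ((one_lt_div hpos).2 hlt))

/-- The growth-rate difference `f(P) = P·log(2P/(1+P)) + ((1−P)/2)·log((1−P)/(1+P))` of the
simplest statistically nontrivial Bayesian game attains a strict global minimum on `(0,1)`
at `P* = 1/√5`, and the corresponding optimal splitting ratio `2P*/(1+P*)` equals
`(√5 − 1)/2`, the reciprocal of the golden ratio. -/
theorem stmt_2 (f : ℝ → ℝ)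
    (hf : ∀ P, f P = P * Real.log (2 * P / (1 + P))
      + ((1 - P) / 2) * Real.log ((1 - P) / (1 + P))) :
    (1 / Real.sqrt 5) ∈ Set.Ioo (0:ℝ) 1 ∧
    (∀ P ∈ Set.Ioo (0:ℝ) 1, P ≠ 1 / Real.sqrt 5 → f (1 / Real.sqrt 5) < f P) ∧
    2 * (1 / Real.sqrt 5) / (1 + 1 / Real.sqrt 5) = (Real.sqrt 5 - 1) / 2 := by
  obtain rfl : f = growthRate := funext hf
  refine ⟨one_div_sqrt_five_mem_Ioo, fun P hP hne => ?_, two_mul_one_div_sqrt_five_div⟩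
  exact lt_apply_of_hasDerivAt_neg_of_pos one_div_sqrt_five_mem_Ioo
    (fun x hx => hasDerivAt_growthRate hx.1 hx.2) (fun x hx => log_four_mul_sq_div_neg hx.1 hx.2)
    (fun x hx => log_four_mul_sq_div_pos hx.1 hx.2) hP hne
end

section
/- Let ι be a finite type and p, q : ι → ℝ with p_k ≥ 0, q_k ≥ 0, Σ_k p_k = 1, Σ_k q_k = 1, and suppose there exists k with p_k > 0 and q_k > 0. For P ∈ (0,1) define ΔG(P) = Σ_k [ P·p_k·log(P·p_k/(P·p_k + (1−P)·q_k)) + (1−P)·q_k·log((1−P)·q_k/(P·p_k + (1−P)·q_k)) ], where a summand whose leading factor P·p_k (respectively (1−P)·q_k) vanishes is read as 0. Then ΔG is twice differentiable on (0,1) with ΔG''(P) = Σ_k p_k·q_k / (P·(1−P)·(P·p_k + (1−P)·q_k)) > 0 for all P ∈ (0,1), and there exists a unique P* ∈ (0,1) such that ΔG(P*) < ΔG(P) for every P ∈ (0,1) with P ≠ P*. -/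
/-!
Writing `s = P a + (1 - P) b`, each summand of `ΔG` is
`negMulLog s - negMulLog (P a) - negMulLog ((1 - P) b)`. Hence `ΔG` is continuous on `[0, 1]`,
vanishes at both endpoints, and inside it has second derivative `∑ a b / (P (1 - P) s)`, which is
positive because some observation has positive probability under both scenarios. So `ΔG` is
strictly convex on `[0, 1]`, and a continuous strictly convex function with equal values at the
endpoints of an interval has a unique minimiser, which lies in the interior and is strict.
-/

open Real Set Filter Topology

lemma strictConvexOn_of_hasDerivAt2_pos {D : Set ℝ} (hD : Convex ℝ D) {f f' f'' : ℝ → ℝ}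
    (hf : ContinuousOn f D) (hf' : ∀ x ∈ interior D, HasDerivAt f (f' x) x)
    (hf'' : ∀ x ∈ interior D, HasDerivAt f' (f'' x) x) (hpos : ∀ x ∈ interior D, 0 < f'' x) :
    StrictConvexOn ℝ D f := by
  refine strictConvexOn_of_deriv2_pos hD hf fun x hx => ?_
  have hderiv : deriv f =ᶠ[𝓝 x] f' :=
    eventually_of_mem (isOpen_interior.mem_nhds hx) fun y hy => (hf' y hy).deriv
  rw [Function.iterate_succ_apply', Function.iterate_one, hderiv.deriv_eq, (hf'' x hx).deriv]
  exact hpos x hx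

lemma StrictConvexOn.lt_of_isMinOn {𝕜 E β : Type*} [Field 𝕜] [LinearOrder 𝕜]
    [IsStrictOrderedRing 𝕜] [AddCommMonoid E] [SMul 𝕜 E] [AddCommMonoid β] [PartialOrder β]
    [IsOrderedAddMonoid β] [Module 𝕜 β] [PosSMulMono 𝕜 β] {s : Set E} {f : E → β} {x y : E}
    (hf : StrictConvexOn 𝕜 s f) (hmin : IsMinOn f s x) (hx : x ∈ s) (hy : y ∈ s) (hyx : y ≠ x) :
    f x < f y :=
  (hmin hy).lt_of_ne fun hxy => hyx <| hf.eq_of_isMinOn (fun _ hz => hxy ▸ hmin hz) hmin hy hx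

lemma StrictConvexOn.existsUnique_mem_Ioo_forall_lt {a b : ℝ} (hab : a < b) {f : ℝ → ℝ}
    (hf : StrictConvexOn ℝ (Icc a b) f) (hcont : ContinuousOn f (Icc a b)) (hfab : f a = f b) :
    ∃! x, x ∈ Ioo a b ∧ ∀ y ∈ Ioo a b, y ≠ x → f x < f y := by
  obtain ⟨x, hx, hmin⟩ := isCompact_Icc.exists_isMinOn (nonempty_Icc.2 hab.le) hcont
  have hlt : ∀ y ∈ Icc a b, y ≠ x → f x < f y := fun y hy => hf.lt_of_isMinOn hmin hx hy
  have hxa : a ≠ x := by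
    rintro rfl
    exact (hlt b (right_mem_Icc.2 hab.le) hab.ne').ne hfab
  have hxb : x ≠ b := by
    rintro rfl
    exact (hlt a (left_mem_Icc.2 hab.le) hab.ne).ne hfab.symm
  have hxI : x ∈ Ioo a b := ⟨hx.1.lt_of_ne hxa, hx.2.lt_of_ne hxb⟩
  refine ⟨x, ⟨hxI, fun y hy => hlt y (Ioo_subset_Icc_self hy)⟩, fun y ⟨hy, hymin⟩ => ?_⟩
  by_contra hyx
  exact (hymin x hxI (Ne.symm hyx)).asymm (hlt y (Ioo_subset_Icc_self hy) hyx)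

lemma mul_log_div_add_add_mul_log_div_add {u v : ℝ} (hu : 0 ≤ u) (hv : 0 ≤ v) :
    u * log (u / (u + v)) + v * log (v / (u + v))
      = negMulLog (u + v) - negMulLog u - negMulLog v := by
  rcases (add_nonneg hu hv).eq_or_lt' with huv | huv
  · obtain ⟨rfl, rfl⟩ : u = 0 ∧ v = 0 := ⟨by linarith, by linarith⟩
    simp
  · have hsplit : ∀ w, w * log (w / (u + v)) = w * log w - w * log (u + v) := by
      intro w
      rcases eq_or_ne w 0 with rfl | hw
      · simp
      · rw [log_div hw huv.ne']
        ring
    rw [hsplit, hsplit]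
    simp only [negMulLog]
    ring

namespace BayesGame

variable {a b P : ℝ}

noncomputable def summand (a b P : ℝ) : ℝ :=
  P * a * log (P * a / (P * a + (1 - P) * b))
    + (1 - P) * b * log ((1 - P) * b / (P * a + (1 - P) * b))

noncomputable def summandDeriv (a b P : ℝ) : ℝ :=
  a * log P - b * log (1 - P) + a * log a - b * log b - (a - b) * log (P * a + (1 - P) * b)

lemma summand_eq_negMulLog (ha : 0 ≤ a) (hb : 0 ≤ b) (hP : P ∈ Icc (0 : ℝ) 1) :
    summand a b P = negMulLog (P * a + (1 - P) * b) - a * negMulLog P - P * negMulLog a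
      - b * negMulLog (1 - P) - (1 - P) * negMulLog b := by
  rw [summand, mul_log_div_add_add_mul_log_div_add (mul_nonneg hP.1 ha)
    (mul_nonneg (sub_nonneg.2 hP.2) hb), negMulLog_mul, negMulLog_mul]
  ring

lemma continuousOn_summand (ha : 0 ≤ a) (hb : 0 ≤ b) : ContinuousOn (summand a b) (Icc 0 1) :=
  (by fun_prop : Continuous fun P => negMulLog (P * a + (1 - P) * b) - a * negMulLog P
      - P * negMulLog a - b * negMulLog (1 - P) - (1 - P) * negMulLog b).continuousOn.congr
    fun _ hP => summand_eq_negMulLog ha hb hP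

lemma summand_zero (ha : 0 ≤ a) (hb : 0 ≤ b) : summand a b 0 = 0 := by
  simp [summand_eq_negMulLog ha hb (left_mem_Icc.2 zero_le_one)]

lemma summand_one (ha : 0 ≤ a) (hb : 0 ≤ b) : summand a b 1 = 0 := by
  simp [summand_eq_negMulLog ha hb (right_mem_Icc.2 zero_le_one)]

lemma mul_add_one_sub_mul_pos (ha : 0 ≤ a) (hb : 0 ≤ b) (hab : 0 < a + b)
    (hP : P ∈ Ioo (0 : ℝ) 1) : 0 < P * a + (1 - P) * b := by
  nlinarith [mul_pos (mul_pos hP.1 (sub_pos.2 hP.2)) hab, mul_nonneg hP.1.le ha,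
    mul_nonneg (sub_pos.2 hP.2).le hb]

lemma hasDerivAt_mul_add_one_sub_mul : HasDerivAt (fun x => x * a + (1 - x) * b) (a - b) P :=
  (((hasDerivAt_id' P).mul_const a).fun_add
    (((hasDerivAt_id' P).const_sub 1).mul_const b)).congr_deriv (by ring)

lemma hasDerivAt_summand (ha : 0 ≤ a) (hb : 0 ≤ b) (hP : P ∈ Ioo (0 : ℝ) 1) :
    HasDerivAt (summand a b) (summandDeriv a b P) P := by
  -- `negMulLog` is not differentiable at `0`, so the summand with `s ≡ 0` is handled apart.
  rcases (add_nonneg ha hb).eq_or_lt' with hab | hab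
  · obtain ⟨rfl, rfl⟩ : a = 0 ∧ b = 0 := ⟨by linarith, by linarith⟩
    rw [show summand 0 0 = fun _ => 0 from funext fun _ => by simp [summand]]
    simpa [summandDeriv] using hasDerivAt_const P (0 : ℝ)
  have hs := mul_add_one_sub_mul_pos ha hb hab hP
  have hP0 : P ≠ 0 := hP.1.ne'
  have hP1 : 1 - P ≠ 0 := (sub_pos.2 hP.2).ne'
  have hsub : HasDerivAt (fun x : ℝ => 1 - x) (-1) P := (hasDerivAt_id' P).const_sub 1
  have key := (((((hasDerivAt_negMulLog hs.ne').comp P hasDerivAt_mul_add_one_sub_mul).sub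
      ((hasDerivAt_negMulLog hP0).const_mul a)).sub
      ((hasDerivAt_id P).mul_const (negMulLog a))).sub
      (((hasDerivAt_negMulLog hP1).comp P hsub).const_mul b)).sub
      (hsub.mul_const (negMulLog b))
  refine (key.congr_of_eventuallyEq ?_).congr_deriv ?_
  · filter_upwards [Ioo_mem_nhds hP.1 hP.2] with x hx
    exact summand_eq_negMulLog ha hb (Ioo_subset_Icc_self hx)
  · simp only [summandDeriv, negMulLog]
    ring

lemma div_add_div_one_sub_sub_sq_div (hP0 : P ≠ 0) (hP1 : 1 - P ≠ 0)
    (hs : P * a + (1 - P) * b ≠ 0) :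
    a / P + b / (1 - P) - (a - b) ^ 2 / (P * a + (1 - P) * b)
      = a * b / (P * (1 - P) * (P * a + (1 - P) * b)) := by
  rw [div_add_div _ _ hP0 hP1, div_sub_div _ _ (mul_ne_zero hP0 hP1) hs]
  congr 1
  ring

lemma hasDerivAt_summandDeriv (ha : 0 ≤ a) (hb : 0 ≤ b) (hP : P ∈ Ioo (0 : ℝ) 1) :
    HasDerivAt (summandDeriv a b) (a * b / (P * (1 - P) * (P * a + (1 - P) * b))) P := by
  rcases (add_nonneg ha hb).eq_or_lt' with hab | hab
  · obtain ⟨rfl, rfl⟩ : a = 0 ∧ b = 0 := ⟨by linarith, by linarith⟩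
    rw [show summandDeriv 0 0 = fun _ => 0 from funext fun _ => by simp [summandDeriv]]
    simpa using hasDerivAt_const P (0 : ℝ)
  have hs := mul_add_one_sub_mul_pos ha hb hab hP
  have hP0 : P ≠ 0 := hP.1.ne'
  have hP1 : 1 - P ≠ 0 := (sub_pos.2 hP.2).ne'
  have hsub : HasDerivAt (fun x : ℝ => 1 - x) (-1) P := (hasDerivAt_id' P).const_sub 1
  have key := (((((hasDerivAt_log hP0).const_mul a).sub
      ((hsub.log hP1).const_mul b)).add_const (a * log a)).sub_const (b * log b)).sub
      ((hasDerivAt_mul_add_one_sub_mul.log hs.ne').const_mul (a - b))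
  refine key.congr_deriv (Eq.trans ?_ (div_add_div_one_sub_sub_sq_div hP0 hP1 hs.ne'))
  ring

lemma sum_secondDeriv_pos {ι : Type*} [Fintype ι] {p q : ι → ℝ} (hp : ∀ k, 0 ≤ p k)
    (hq : ∀ k, 0 ≤ q k) (hsupp : ∃ k, 0 < p k ∧ 0 < q k) (hP : P ∈ Ioo (0 : ℝ) 1) :
    0 < ∑ k, p k * q k / (P * (1 - P) * (P * p k + (1 - P) * q k)) := by
  obtain ⟨hP0, hP1⟩ := hP
  have h1P : 0 < 1 - P := sub_pos.2 hP1
  obtain ⟨k₀, hpk₀, hqk₀⟩ := hsupp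
  refine Finset.sum_pos' (fun k _ => ?_) ⟨k₀, Finset.mem_univ _, by positivity⟩
  have hpk := hp k
  have hqk := hq k
  positivity

end BayesGame

open BayesGame

theorem stmt_3_general {ι : Type*} [Fintype ι] (p q : ι → ℝ)
    (hp : ∀ k, 0 ≤ p k) (hq : ∀ k, 0 ≤ q k)
    (hsupp : ∃ k, 0 < p k ∧ 0 < q k)
    (ΔG : ℝ → ℝ)
    (hΔG : ∀ P, ΔG P = ∑ k,
      (P * p k * Real.log (P * p k / (P * p k + (1 - P) * q k))
        + (1 - P) * q k * Real.log ((1 - P) * q k / (P * p k + (1 - P) * q k)))) :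
    (∃ ΔG' : ℝ → ℝ, ∀ P ∈ Set.Ioo (0:ℝ) 1,
      HasDerivAt ΔG (ΔG' P) P ∧
      HasDerivAt ΔG' (∑ k, p k * q k / (P * (1 - P) * (P * p k + (1 - P) * q k))) P) ∧
    (∀ P ∈ Set.Ioo (0:ℝ) 1,
      0 < ∑ k, p k * q k / (P * (1 - P) * (P * p k + (1 - P) * q k))) ∧
    (∃! Pstar : ℝ, Pstar ∈ Set.Ioo (0:ℝ) 1 ∧
      ∀ P ∈ Set.Ioo (0:ℝ) 1, P ≠ Pstar → ΔG Pstar < ΔG P) := by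
  have hΔG_eq : ΔG = fun P => ∑ k, summand (p k) (q k) P := funext hΔG
  set ΔG' := fun P => ∑ k, summandDeriv (p k) (q k) P
  have hderiv (P) (hP : P ∈ Ioo (0 : ℝ) 1) : HasDerivAt ΔG (ΔG' P) P :=
    hΔG_eq ▸ HasDerivAt.fun_sum fun k _ => hasDerivAt_summand (hp k) (hq k) hP
  have hderiv2 (P) (hP : P ∈ Ioo (0 : ℝ) 1) :
      HasDerivAt ΔG' (∑ k, p k * q k / (P * (1 - P) * (P * p k + (1 - P) * q k))) P :=
    HasDerivAt.fun_sum fun k _ => hasDerivAt_summandDeriv (hp k) (hq k) hP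
  have hpos (P) (hP : P ∈ Ioo (0 : ℝ) 1) := sum_secondDeriv_pos hp hq hsupp hP
  have hcont : ContinuousOn ΔG (Icc 0 1) :=
    hΔG_eq ▸ continuousOn_finsetSum _ fun k _ => continuousOn_summand (hp k) (hq k)
  have hconv : StrictConvexOn ℝ (Icc 0 1) ΔG :=
    strictConvexOn_of_hasDerivAt2_pos (convex_Icc 0 1) hcont (f' := ΔG')
      (by simpa only [interior_Icc] using hderiv) (by simpa only [interior_Icc] using hderiv2)
      (by simpa only [interior_Icc] using hpos)
  have hends : ΔG 0 = ΔG 1 := by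
    simp [hΔG_eq, summand_zero (hp _) (hq _), summand_one (hp _) (hq _)]
  exact ⟨⟨ΔG', fun P hP => ⟨hderiv P hP, hderiv2 P hP⟩⟩, hpos,
    hconv.existsUnique_mem_Ioo_forall_lt zero_lt_one hcont hends⟩

/-- For probability vectors `p`, `q` with intersecting supports, the growth-rate
difference `ΔG(P)` (minus the conditional entropy of the scenario given the observation)
is twice differentiable on `(0,1)` with the stated strictly positive second derivative,
and it has a unique strict global minimizer `P* ∈ (0,1)`.
(Summands with vanishing leading factor are `0` automatically, since `Real.log 0 = 0`
and the leading factor multiplies the whole summand.) -/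
theorem stmt_3 {ι : Type*} [Fintype ι] (p q : ι → ℝ)
    (hp : ∀ k, 0 ≤ p k) (hq : ∀ k, 0 ≤ q k)
    (hps : (∑ k, p k) = 1) (hqs : (∑ k, q k) = 1)
    (hsupp : ∃ k, 0 < p k ∧ 0 < q k)
    (ΔG : ℝ → ℝ)
    (hΔG : ∀ P, ΔG P = ∑ k,
      (P * p k * Real.log (P * p k / (P * p k + (1 - P) * q k))
        + (1 - P) * q k * Real.log ((1 - P) * q k / (P * p k + (1 - P) * q k)))) :
    (∃ ΔG' : ℝ → ℝ, ∀ P ∈ Set.Ioo (0:ℝ) 1,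
      HasDerivAt ΔG (ΔG' P) P ∧
      HasDerivAt ΔG' (∑ k, p k * q k / (P * (1 - P) * (P * p k + (1 - P) * q k))) P) ∧
    (∀ P ∈ Set.Ioo (0:ℝ) 1,
      0 < ∑ k, p k * q k / (P * (1 - P) * (P * p k + (1 - P) * q k))) ∧
    (∃! Pstar : ℝ, Pstar ∈ Set.Ioo (0:ℝ) 1 ∧
      ∀ P ∈ Set.Ioo (0:ℝ) 1, P ≠ Pstar → ΔG Pstar < ΔG P) :=
  stmt_3_general p q hp hq hsupp ΔG hΔG
end

section
/- Let ι be a finite type and p, q : ι → ℝ with p_k ≥ 0, q_k ≥ 0, Σ_k p_k = 1, Σ_k q_k = 1, and suppose there exists k with p_k > 0 and q_k > 0. Define ΔH = Σ_k q_k·log(q_k) − Σ_k p_k·log(p_k) and F : ℝ → ℝ by F(ϑ) = ΔH + Σ_k (p_k − q_k)·log(e^{ϑ/2}·p_k + e^{−ϑ/2}·q_k), where summands with p_k = q_k = 0 are read as 0. Then F is Lipschitz with constant q = (1/2)·Σ_k |p_k − q_k|, one has q < 1, and F has exactly one fixed point ϑ* ∈ ℝ. -/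
private lemma logA_sub_le (a b : ℝ) (ha : 0 ≤ a) (hb : 0 ≤ b) (hab : 0 < a + b) (x y : ℝ) :
    Real.log (Real.exp (x / 2) * a + Real.exp (-x / 2) * b)
      - Real.log (Real.exp (y / 2) * a + Real.exp (-y / 2) * b) ≤ |x - y| / 2 := by
  have hposgen : ∀ t : ℝ, 0 < Real.exp (t / 2) * a + Real.exp (-t / 2) * b := by
    intro t
    rcases ha.eq_or_lt with h | h
    · have hb' : 0 < b := by linarith
      have := Real.exp_pos (-t / 2)
      nlinarith [Real.exp_pos (t / 2)]
    · nlinarith [Real.exp_pos (t / 2), Real.exp_pos (-t / 2), mul_nonneg (Real.exp_pos (-t/2)).le hb]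
  have hx := hposgen x
  have hy := hposgen y
  have key : Real.exp (x / 2) * a + Real.exp (-x / 2) * b
      ≤ Real.exp (|x - y| / 2) * (Real.exp (y / 2) * a + Real.exp (-y / 2) * b) := by
    have h1 : Real.exp (x / 2) ≤ Real.exp (|x - y| / 2) * Real.exp (y / 2) := by
      rw [← Real.exp_add]
      exact Real.exp_le_exp.2 (by have := le_abs_self (x - y); linarith)
    have h2 : Real.exp (-x / 2) ≤ Real.exp (|x - y| / 2) * Real.exp (-y / 2) := by
      rw [← Real.exp_add]
      exact Real.exp_le_exp.2 (by have := neg_abs_le (x - y); linarith)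
    nlinarith [mul_le_mul_of_nonneg_right h1 ha, mul_le_mul_of_nonneg_right h2 hb]
  have hlog := Real.log_le_log hx key
  rw [Real.log_mul (Real.exp_ne_zero _) (ne_of_gt hy), Real.log_exp] at hlog
  linarith

private lemma logA_abs_sub_le (a b : ℝ) (ha : 0 ≤ a) (hb : 0 ≤ b) (hab : 0 < a + b) (x y : ℝ) :
    |Real.log (Real.exp (x / 2) * a + Real.exp (-x / 2) * b)
      - Real.log (Real.exp (y / 2) * a + Real.exp (-y / 2) * b)| ≤ |x - y| / 2 := by
  rw [abs_sub_le_iff]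
  constructor
  · exact logA_sub_le a b ha hb hab x y
  · have := logA_sub_le a b ha hb hab y x
    rwa [abs_sub_comm] at this

/-- For probability vectors `p`, `q` with intersecting supports, the log-odds iteration map
`F(ϑ) = ΔH + Σ_k (p_k − q_k)·log(e^{ϑ/2}·p_k + e^{−ϑ/2}·q_k)` is Lipschitz with constant
`(1/2)·Σ_k |p_k − q_k| < 1` (the total variation distance) and has exactly one fixed point.
(Summands with `p_k = q_k = 0` vanish automatically since their factor `p_k − q_k` is `0`.) -/
theorem stmt_4 {ι : Type*} [Fintype ι] (p q : ι → ℝ)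
    (hp : ∀ k, 0 ≤ p k) (hq : ∀ k, 0 ≤ q k)
    (hps : (∑ k, p k) = 1) (hqs : (∑ k, q k) = 1)
    (hsupp : ∃ k, 0 < p k ∧ 0 < q k)
    (ΔH : ℝ) (hΔH : ΔH = (∑ k, q k * Real.log (q k)) - ∑ k, p k * Real.log (p k))
    (F : ℝ → ℝ)
    (hF : ∀ ϑ, F ϑ = ΔH + ∑ k, (p k - q k) *
      Real.log (Real.exp (ϑ / 2) * p k + Real.exp (-ϑ / 2) * q k)) :
    (∀ x y : ℝ, |F x - F y| ≤ ((1/2) * ∑ k, |p k - q k|) * |x - y|) ∧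
    ((1/2) * ∑ k, |p k - q k|) < 1 ∧
    (∃! ϑstar : ℝ, F ϑstar = ϑstar) := by
  set c : ℝ := (1/2) * ∑ k, |p k - q k| with hc
  have hlip : ∀ x y : ℝ, |F x - F y| ≤ c * |x - y| := by
    intro x y
    have hdiff : F x - F y = ∑ k, (p k - q k) *
        (Real.log (Real.exp (x / 2) * p k + Real.exp (-x / 2) * q k)
          - Real.log (Real.exp (y / 2) * p k + Real.exp (-y / 2) * q k)) := by
      rw [hF x, hF y, add_sub_add_left_eq_sub, ← Finset.sum_sub_distrib]
      exact Finset.sum_congr rfl fun k _ => by ring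
    rw [hdiff]
    calc |∑ k, (p k - q k) *
        (Real.log (Real.exp (x / 2) * p k + Real.exp (-x / 2) * q k)
          - Real.log (Real.exp (y / 2) * p k + Real.exp (-y / 2) * q k))|
        ≤ ∑ k, |(p k - q k) *
        (Real.log (Real.exp (x / 2) * p k + Real.exp (-x / 2) * q k)
          - Real.log (Real.exp (y / 2) * p k + Real.exp (-y / 2) * q k))| :=
          Finset.abs_sum_le_sum_abs _ _
      _ ≤ ∑ k, |p k - q k| * (|x - y| / 2) := by
          refine Finset.sum_le_sum fun k _ => ?_
          rw [abs_mul]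
          by_cases hk : p k - q k = 0
          · simp only [hk, abs_zero, zero_mul]
            positivity
          · have hpos : 0 < p k + q k := by
              rcases (hp k).eq_or_lt with h | h
              · rcases (hq k).eq_or_lt with h' | h'
                · exact absurd (by rw [← h, ← h']; ring) hk
                · linarith
              · linarith [hq k]
            exact mul_le_mul_of_nonneg_left
              (logA_abs_sub_le (p k) (q k) (hp k) (hq k) hpos x y) (abs_nonneg _)
      _ = c * |x - y| := by rw [← Finset.sum_mul, hc]; ring
  have hc1 : c < 1 := by
    have hsum : (∑ k, |p k - q k|) < ∑ k, (p k + q k) := by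
      obtain ⟨k0, hk0p, hk0q⟩ := hsupp
      refine Finset.sum_lt_sum (fun k _ => ?_) ⟨k0, Finset.mem_univ k0, ?_⟩
      · rcases abs_cases (p k - q k) with ⟨h, _⟩ | ⟨h, _⟩ <;>
          [linarith [hq k]; linarith [hp k]]
      · rcases abs_cases (p k0 - q k0) with ⟨h, _⟩ | ⟨h, _⟩ <;> linarith
    have : (∑ k, (p k + q k)) = 2 := by rw [Finset.sum_add_distrib, hps, hqs]; norm_num
    rw [hc]; linarith
  refine ⟨hlip, hc1, ?_⟩
  have hcnn : 0 ≤ c := by rw [hc]; positivity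
  set K : NNReal := ⟨c, hcnn⟩ with hK
  have hLip : LipschitzWith K F := by
    apply LipschitzWith.of_dist_le_mul
    intro x y
    rw [Real.dist_eq, Real.dist_eq]
    exact hlip x y
  have hContr : ContractingWith K F := ⟨by exact_mod_cast hc1, hLip⟩
  exact ⟨hContr.fixedPoint F, hContr.fixedPoint_isFixedPt,
    fun y hy => hContr.fixedPoint_unique hy⟩
end

section
/- Let M, N, K_A, K_B, k be natural numbers with K_A < K_B ≤ M, N ≤ M, 1 ≤ k ≤ min(K_A, N), and N + K_B ≤ M + k − 1. Define the hypergeometric weights p_j(K) = (C(K,j)·C(M−K, N−j))/C(M,N) as real numbers, where C denotes the binomial coefficient (with C(a,b) = 0 when b > a). Then p_k(K_A)·p_{k−1}(K_B) < p_{k−1}(K_A)·p_k(K_B); equivalently, the likelihood ratio p_j(K_B)/p_j(K_A) is strictly increasing from j = k−1 to j = k. -/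
lemma stmt_5_nat (M N KA KB k : ℕ)
    (h1 : KA < KB) (h2 : KB ≤ M) (h3 : N ≤ M)
    (h4 : 1 ≤ k) (h5 : k ≤ min KA N) (h6 : N + KB ≤ M + k - 1) :
    KA.choose k * (M - KA).choose (N - k) * (KB.choose (k-1) * (M - KB).choose (N - (k-1)))
      < KA.choose (k-1) * (M - KA).choose (N - (k-1)) * (KB.choose k * (M - KB).choose (N - k)) := by
  obtain ⟨j, rfl⟩ : ∃ j, k = j + 1 := ⟨k - 1, by omega⟩
  set m := N - (j + 1) with hm
  have hNj : N - j = m + 1 := by omega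
  simp only [Nat.add_sub_cancel, hNj]
  have hjKA : j + 1 ≤ KA := by omega
  have hjKB : j + 1 ≤ KB := by omega
  have hmKB : m + 1 ≤ M - KB := by omega
  have hmKA : m + 1 ≤ M - KA := by omega
  have e1 : KA.choose (j+1) * (j+1) = KA.choose j * (KA - j) := Nat.choose_succ_right_eq _ _
  have e2 : KB.choose (j+1) * (j+1) = KB.choose j * (KB - j) := Nat.choose_succ_right_eq _ _
  have e3 : (M - KA).choose (m+1) * (m+1) = (M - KA).choose m * (M - KA - m) :=
    Nat.choose_succ_right_eq _ _
  have e4 : (M - KB).choose (m+1) * (m+1) = (M - KB).choose m * (M - KB - m) :=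
    Nat.choose_succ_right_eq _ _
  have hP : 0 < KA.choose j * KB.choose j * ((M - KA).choose m * (M - KB).choose m) := by
    have := Nat.choose_pos (show j ≤ KA by omega)
    have := Nat.choose_pos (show j ≤ KB by omega)
    have := Nat.choose_pos (show m ≤ M - KA by omega)
    have := Nat.choose_pos (show m ≤ M - KB by omega)
    positivity
  have hscal : (KA - j) * (M - KB - m) < (KB - j) * (M - KA - m) := by
    have ha : KA - j < KB - j := by omega
    have hd : M - KB - m < M - KA - m := by omega
    exact Nat.mul_lt_mul_of_lt_of_lt ha hd
  refine Nat.lt_of_mul_lt_mul_right (a := (j+1)*(m+1)) ?_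
  calc KA.choose (j+1) * (M - KA).choose m * (KB.choose j * (M - KB).choose (m+1))
        * ((j+1)*(m+1))
      = (KA.choose (j+1) * (j+1)) * ((M - KB).choose (m+1) * (m+1))
          * ((M - KA).choose m * KB.choose j) := by ring
    _ = (KA.choose j * KB.choose j * ((M - KA).choose m * (M - KB).choose m))
          * ((KA - j) * (M - KB - m)) := by rw [e1, e4]; ring
    _ < (KA.choose j * KB.choose j * ((M - KA).choose m * (M - KB).choose m))
          * ((KB - j) * (M - KA - m)) := mul_lt_mul_of_pos_left hscal hP
    _ = (KB.choose (j+1) * (j+1)) * ((M - KA).choose (m+1) * (m+1))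
          * ((M - KB).choose m * KA.choose j) := by rw [e2, e3]; ring
    _ = KA.choose j * (M - KA).choose (m+1) * (KB.choose (j+1) * (M - KB).choose m)
          * ((j+1)*(m+1)) := by ring

/-- Strict monotone likelihood ratio step for hypergeometric weights:
under the stated hypotheses (which guarantee all four weights are positive),
`p_k(K_A)·p_{k−1}(K_B) < p_{k−1}(K_A)·p_k(K_B)`. -/
theorem stmt_5 (M N KA KB k : ℕ)
    (h1 : KA < KB) (h2 : KB ≤ M) (h3 : N ≤ M)
    (h4 : 1 ≤ k) (h5 : k ≤ min KA N) (h6 : N + KB ≤ M + k - 1)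
    (p : ℕ → ℕ → ℝ)
    (hp : ∀ K j, p K j
      = ((K.choose j : ℝ) * ((M - K).choose (N - j) : ℝ)) / (M.choose N : ℝ)) :
    p KA k * p KB (k - 1) < p KA (k - 1) * p KB k := by
  have hD : (0:ℝ) < (M.choose N : ℝ) := by exact_mod_cast Nat.choose_pos h3
  simp only [hp]
  rw [div_mul_div_comm, div_mul_div_comm, div_lt_div_iff₀ (by positivity) (by positivity)]
  have := stmt_5_nat M N KA KB k h1 h2 h3 h4 h5 h6
  have h' : ((KA.choose k * (M - KA).choose (N - k) *
      (KB.choose (k-1) * (M - KB).choose (N - (k-1)))) : ℝ)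
      < ((KA.choose (k-1) * (M - KA).choose (N - (k-1)) *
      (KB.choose k * (M - KB).choose (N - k))) : ℝ) := by exact_mod_cast this
  nlinarith [h', hD, mul_pos hD hD]
end

section
/- Let M, N, K_A, K_B be naturals with K_A < K_B ≤ M and N ≤ M, and let p_j(A) = (C(K_A,j)·C(M−K_A,N−j))/C(M,N) and p_j(B) = (C(K_B,j)·C(M−K_B,N−j))/C(M,N) for j = 0,…,N. Let k* be the least k ∈ {0,…,N} with Σ_{j=0}^{k} (p_j(A) + p_j(B)) > 1 (it exists since the full sum equals 2). Assume p_{k*}(A) > 0 and p_{k*}(B) > 0, and set P* = p_{k*}(B)/(p_{k*}(A) + p_{k*}(B)). Then for every ℓ ∈ {0,…,N}: if ℓ > k* and p_ℓ(B) > 0 then P*·p_ℓ(A) < (1−P*)·p_ℓ(B), and if ℓ < k* and p_ℓ(A) > 0 then P*·p_ℓ(A) > (1−P*)·p_ℓ(B). -/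
/-!
Up to the common factor `C(M,N)`, the weights are `w_K(j) = C(K,j)·C(M−K,N−j)`, and
`w_K(j+1)/w_K(j) = (K−j)(N−j) / ((j+1)(M−K−N+j+1))` increases strictly with `K`. So the
likelihood ratio `p_j(B)/p_j(A)` is strictly increasing in `j` on the common support, and both
inequalities compare this ratio at `ℓ` with its value `P*/(1−P*)` at `k*`. Outside the support one side vanishes and the inequality is trivial.
-/

section CrossRatio

variable {R : Type*} [CommSemiring R] [LinearOrder R] [IsStrictOrderedRing R]

theorem cross_lt_of_succ_cross_lt {a b : ℕ → R} {k l : ℕ} (hkl : k < l)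
    (ha : ∀ j ∈ Set.Icc k l, 0 < a j) (hb : ∀ j ∈ Set.Icc k l, 0 < b j)
    (hstep : ∀ j, k ≤ j → j < l → a (j + 1) * b j < a j * b (j + 1)) :
    b k * a l < a k * b l := by
  induction l, hkl using Nat.le_induction with
  | base => simpa only [mul_comm (b k)] using hstep k le_rfl (Nat.lt_succ_self k)
  | succ m hkm ih =>
    replace hkm : k < m := hkm
    have ham := ha m ⟨hkm.le, m.le_succ⟩
    have hbm := hb m ⟨hkm.le, m.le_succ⟩
    have ih' := ih (fun j hj ↦ ha j ⟨hj.1, hj.2.trans m.le_succ⟩)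
      (fun j hj ↦ hb j ⟨hj.1, hj.2.trans m.le_succ⟩) fun j hkj hjm ↦ hstep j hkj (hjm.trans m.lt_succ_self)
    have hprod := mul_lt_mul'' ih' (hstep m hkm.le m.lt_succ_self)
      (mul_pos (hb k ⟨le_rfl, hkm.le.trans m.le_succ⟩) ham).le
      (mul_pos (ha (m + 1) ⟨(hkm.trans m.lt_succ_self).le, le_rfl⟩) hbm).le
    refine lt_of_mul_lt_mul_right (a := a m * b m) ?_ (mul_pos ham hbm).le
    calc b k * a (m + 1) * (a m * b m) = b k * a m * (a (m + 1) * b m) := by ring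
      _ < a k * b m * (a m * b (m + 1)) := hprod
      _ = a k * b (m + 1) * (a m * b m) := by ring

end CrossRatio

def hypergeomWeight (M K N j : ℕ) : ℕ := K.choose j * (M - K).choose (N - j)

theorem hypergeomWeight_pos_iff {M K N j : ℕ} :
    0 < hypergeomWeight M K N j ↔ j ≤ K ∧ N ≤ M - K + j := by
  simp only [hypergeomWeight, Nat.pos_iff_ne_zero, ne_eq, mul_eq_zero, Nat.choose_eq_zero_iff,
    not_or, not_lt]
  omega

theorem hypergeomWeight_succ_mul {M K N j r : ℕ} (hr : j + 1 + r = N) :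
    hypergeomWeight M K N (j + 1) * ((j + 1) * (M - K - r)) =
      hypergeomWeight M K N j * ((r + 1) * (K - j)) := by
  obtain rfl : N = j + 1 + r := hr.symm
  have hsucc : j + 1 + r - j = r + 1 := by omega
  simp only [hypergeomWeight, hsucc, Nat.add_sub_cancel_left]
  calc K.choose (j + 1) * (M - K).choose r * ((j + 1) * (M - K - r))
      = (K.choose (j + 1) * (j + 1)) * ((M - K).choose r * (M - K - r)) := by ring
    _ = (K.choose j * (K - j)) * ((M - K).choose (r + 1) * (r + 1)) := by
        rw [Nat.choose_succ_right_eq, Nat.choose_succ_right_eq]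
    _ = K.choose j * (M - K).choose (r + 1) * ((r + 1) * (K - j)) := by ring

theorem hypergeomWeight_succ_cross_lt {M KA KB N j : ℕ} (h1 : KA < KB) (hjN : j < N)
    (ha : 0 < hypergeomWeight M KA N (j + 1)) (hb : 0 < hypergeomWeight M KB N j) :
    hypergeomWeight M KA N (j + 1) * hypergeomWeight M KB N j <
      hypergeomWeight M KA N j * hypergeomWeight M KB N (j + 1) := by
  set r := N - (j + 1)
  have hr : j + 1 + r = N := by omega
  obtain ⟨hjKA, -⟩ := hypergeomWeight_pos_iff.1 ha
  obtain ⟨-, hNKB⟩ := hypergeomWeight_pos_iff.1 hb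
  set a₀ := hypergeomWeight M KA N j
  set a₁ := hypergeomWeight M KA N (j + 1)
  set b₀ := hypergeomWeight M KB N j
  set b₁ := hypergeomWeight M KB N (j + 1)
  have hA : a₁ * ((j + 1) * (M - KA - r)) = a₀ * ((r + 1) * (KA - j)) :=
    hypergeomWeight_succ_mul hr
  have hB : b₁ * ((j + 1) * (M - KB - r)) = b₀ * ((r + 1) * (KB - j)) :=
    hypergeomWeight_succ_mul hr
  have ha₀ : 0 < a₀ := hypergeomWeight_pos_iff.2 ⟨by omega, by omega⟩
  have hratio : (KA - j) * (M - KB - r) < (KB - j) * (M - KA - r) := by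
    obtain ⟨d, hd⟩ : ∃ d, KB - j = KA - j + (d + 1) ∧ M - KA - r = M - KB - r + (d + 1) :=
      ⟨KB - KA - 1, by omega, by omega⟩
    rw [hd.1, hd.2]
    nlinarith [show 1 ≤ KA - j by omega, show 1 ≤ M - KB - r by omega]
  refine lt_of_mul_lt_mul_right (a := (j + 1) * (M - KA - r) * (M - KB - r)) ?_ (Nat.zero_le _)
  calc a₁ * b₀ * ((j + 1) * (M - KA - r) * (M - KB - r))
      = a₁ * ((j + 1) * (M - KA - r)) * b₀ * (M - KB - r) := by ring
    _ = a₀ * b₀ * (r + 1) * ((KA - j) * (M - KB - r)) := by rw [hA]; ring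
    _ < a₀ * b₀ * (r + 1) * ((KB - j) * (M - KA - r)) :=
        Nat.mul_lt_mul_of_pos_left hratio (by positivity)
    _ = a₀ * (b₀ * ((r + 1) * (KB - j))) * (M - KA - r) := by ring
    _ = a₀ * b₁ * ((j + 1) * (M - KA - r) * (M - KB - r)) := by rw [← hB]; ring

theorem hypergeomWeight_cross_lt {M KA KB N k l : ℕ} (h1 : KA < KB) (hkl : k < l) (hlN : l ≤ N)
    (hak : 0 < hypergeomWeight M KA N k) (hbl : 0 < hypergeomWeight M KB N l) :
    hypergeomWeight M KB N k * hypergeomWeight M KA N l <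
      hypergeomWeight M KA N k * hypergeomWeight M KB N l := by
  rcases Nat.eq_zero_or_pos (hypergeomWeight M KB N k) with hbk | hbk
  · rw [hbk, zero_mul]; positivity
  rcases Nat.eq_zero_or_pos (hypergeomWeight M KA N l) with hal | hal
  · rw [hal, mul_zero]; positivity
  replace hak := hypergeomWeight_pos_iff.1 hak
  replace hbl := hypergeomWeight_pos_iff.1 hbl
  replace hbk := hypergeomWeight_pos_iff.1 hbk
  replace hal := hypergeomWeight_pos_iff.1 hal
  exact cross_lt_of_succ_cross_lt hkl
    (fun j ⟨hkj, hjl⟩ ↦ hypergeomWeight_pos_iff.2 (by omega))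
    (fun j ⟨hkj, hjl⟩ ↦ hypergeomWeight_pos_iff.2 (by omega))
    fun j hkj hjl ↦ hypergeomWeight_succ_cross_lt h1 (by omega)
      (hypergeomWeight_pos_iff.2 (by omega)) (hypergeomWeight_pos_iff.2 (by omega))

theorem stmt_6_general (M N KA KB : ℕ) (h1 : KA < KB) (h3 : N ≤ M)
    (pA pB : ℕ → ℝ)
    (hpA : ∀ j, pA j = ((KA.choose j : ℝ) * ((M - KA).choose (N - j) : ℝ)) / (M.choose N : ℝ))
    (hpB : ∀ j, pB j = ((KB.choose j : ℝ) * ((M - KB).choose (N - j) : ℝ)) / (M.choose N : ℝ))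
    (kstar : ℕ) (hk : kstar ≤ N)
    (hA : 0 < pA kstar) (hB : 0 < pB kstar)
    (Pstar : ℝ) (hP : Pstar = pB kstar / (pA kstar + pB kstar)) :
    ∀ ℓ ≤ N,
      (kstar < ℓ → 0 < pB ℓ → Pstar * pA ℓ < (1 - Pstar) * pB ℓ) ∧
      (ℓ < kstar → 0 < pA ℓ → (1 - Pstar) * pB ℓ < Pstar * pA ℓ) := by
  have hC : (0 : ℝ) < M.choose N := by exact_mod_cast Nat.choose_pos h3
  have hw : ∀ K j, ((K.choose j : ℝ) * ((M - K).choose (N - j) : ℝ)) / (M.choose N : ℝ) =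
      (hypergeomWeight M K N j : ℝ) / M.choose N := by
    intro K j; push_cast [hypergeomWeight]; rfl
  simp only [hw] at hpA hpB
  have hpos : ∀ K j, (0 : ℝ) < hypergeomWeight M K N j / M.choose N ↔
      0 < hypergeomWeight M K N j := fun K j ↦ by rw [div_pos_iff_of_pos_right hC, Nat.cast_pos]
  have hS : 0 < pA kstar + pB kstar := add_pos hA hB
  have h1P : 1 - Pstar = pA kstar / (pA kstar + pB kstar) := by rw [hP]; field_simp; ring
  have hcross : ∀ {u v x y : ℕ}, u * x < v * y →
      (u : ℝ) / M.choose N * ((x : ℝ) / M.choose N) < (v : ℝ) / M.choose N * ((y : ℝ) / M.choose N) := by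
    intro u v x y h
    rw [div_mul_div_comm, div_mul_div_comm, div_lt_div_iff_of_pos_right (mul_pos hC hC)]
    exact_mod_cast h
  intro ℓ hℓ
  rw [h1P, hP]
  simp only [div_mul_eq_mul_div, div_lt_div_iff_of_pos_right hS]
  simp only [hpA, hpB, hpos] at hA hB ⊢
  refine ⟨fun hkℓ hBℓ ↦ hcross (hypergeomWeight_cross_lt h1 hkℓ hℓ hA hBℓ),
    fun hℓk hAℓ ↦ hcross ?_⟩
  simpa only [mul_comm] using hypergeomWeight_cross_lt h1 hℓk hk hAℓ hB

/-- In the symmetric equilibrium of the Fisher game `𝔊(N,K_A,K_B,M)`, with `k*` the least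
index where the cumulative sum of the two hypergeometric weight vectors exceeds `1` and
`P* = p_{k*}(B)/(p_{k*}(A)+p_{k*}(B))`, guessing `B` above the threshold and `A` below it
is strictly optimal: for `ℓ > k*` with `p_ℓ(B) > 0` one has `P*·p_ℓ(A) < (1−P*)·p_ℓ(B)`,
and for `ℓ < k*` with `p_ℓ(A) > 0` one has `P*·p_ℓ(A) > (1−P*)·p_ℓ(B)`. -/
theorem stmt_6 (M N KA KB : ℕ) (h1 : KA < KB) (h2 : KB ≤ M) (h3 : N ≤ M)
    (pA pB : ℕ → ℝ)
    (hpA : ∀ j, pA j = ((KA.choose j : ℝ) * ((M - KA).choose (N - j) : ℝ)) / (M.choose N : ℝ))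
    (hpB : ∀ j, pB j = ((KB.choose j : ℝ) * ((M - KB).choose (N - j) : ℝ)) / (M.choose N : ℝ))
    (kstar : ℕ) (hk : kstar ≤ N)
    (hgt : 1 < ∑ j ∈ Finset.range (kstar + 1), (pA j + pB j))
    (hleast : ∀ k < kstar, (∑ j ∈ Finset.range (k + 1), (pA j + pB j)) ≤ 1)
    (hA : 0 < pA kstar) (hB : 0 < pB kstar)
    (Pstar : ℝ) (hP : Pstar = pB kstar / (pA kstar + pB kstar)) :
    ∀ ℓ ≤ N,
      (kstar < ℓ → 0 < pB ℓ → Pstar * pA ℓ < (1 - Pstar) * pB ℓ) ∧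
      (ℓ < kstar → 0 < pA ℓ → (1 - Pstar) * pB ℓ < Pstar * pA ℓ) :=
  stmt_6_general M N KA KB h1 h3 pA pB hpA hpB kstar hk hA hB Pstar hP
end

section
/- Let N ∈ ℕ and x_A, x_B ∈ (0,1) with x_A ≤ x_B. Define the binomial weights p_k(x) = C(N,k)·x^k·(1−x)^{N−k} for k = 0,…,N, and let k* be the least k ∈ {0,…,N} with Σ_{j=0}^{k} (p_j(x_A) + p_j(x_B)) > 1 (it exists since the full sum equals 2). Then ⌊x_A·N⌋ ≤ k* ≤ ⌈x_B·N⌉. -/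
/-!
Both bounds reduce to the median inequalities `P(X ≤ k) < 1/2` for `k + 1 ≤ np` and
`P(X ≤ c) > 1/2` for `np ≤ c`, for `X ~ Bin(n, p)`, applied to both components of the mixture.

By the symmetry `k ↦ n - k`, `p ↦ 1 - p` it suffices to take `p ≤ 1/2`. Binomial weights `f` at
indices placed symmetrically about a centre are compared by moving outwards one step at a time; the
ratio test for such a step (`outwardGap`) only improves further out because `p ≤ 1/2`. With
centre `m - 1/2`, `m ≤ np`, this gives `f (m - 1 - j) < f (m + j)`, so the left tail below `m` is
lighter than the rest. With centre `c ≥ np` the differences `f (c + i) - f (c - i)` change sign at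
most once, from nonpositive to positive, while `∑ i (f (c + i) - f (c - i)) = np - c ≤ 0`; this
forces `P(X > c) ≤ P(X < c)`.
-/

open Finset Polynomial

theorem Finset.sum_nonpos_of_single_crossing {ι : Type*} [LinearOrder ι] {s : Finset ι}
    {w e : ι → ℝ} (hw : Monotone w) (hw0 : ∀ i ∈ s, 0 < w i)
    (hcross : ∀ k ∈ s, 0 < e k → ∀ i ∈ s, k ≤ i → 0 ≤ e i)
    (hmom : ∑ i ∈ s, w i * e i ≤ 0) : ∑ i ∈ s, e i ≤ 0 := by
  rcases (s.filter (0 < e ·)).eq_empty_or_nonempty with hempty | hne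
  · exact sum_nonpos fun i hi => not_lt.mp (filter_eq_empty_iff.mp hempty hi)
  · obtain ⟨K, hK, hKmin⟩ := (s.filter (0 < e ·)).exists_min_image id hne
    rw [mem_filter] at hK
    -- `K` is the first index with `0 < e K`, so every `(w i - w K) * e i` is nonnegative.
    have hterm : ∀ i ∈ s, w K * e i ≤ w i * e i := by
      intro i hi
      rcases le_or_gt K i with hKi | hiK
      · exact mul_le_mul_of_nonneg_right (hw hKi) (hcross K hK.1 hK.2 i hi hKi)
      · have hei : e i ≤ 0 := by
          by_contra! hei
          exact absurd (hKmin i (mem_filter.mpr ⟨hi, hei⟩)) (not_le.mpr hiK)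
        exact mul_le_mul_of_nonpos_right (hw hiK.le) hei
    have : w K * ∑ i ∈ s, e i ≤ 0 := by
      rw [mul_sum]
      exact (sum_le_sum hterm).trans hmom
    exact nonpos_of_mul_nonpos_right this (hw0 K hK.1)

theorem Finset.sum_range_add_one_add {M : Type*} [AddCommGroup M] {g : ℕ → M} {n : ℕ} (c : ℕ)
    (hg : ∀ j, n < j → g j = 0) :
    ∑ i ∈ range n, g (c + 1 + i) = ∑ j ∈ range (n + 1), g j - ∑ j ∈ range (c + 1), g j := by
  have hext : ∑ j ∈ range (c + 1 + n), g j = ∑ j ∈ range (n + 1), g j := by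
    rw [show c + 1 + n = n + 1 + c by omega, sum_range_add,
      sum_eq_zero (s := range c) fun i _ => hg _ (by omega), add_zero]
  rw [← hext, sum_range_add, add_sub_cancel_left]

theorem Finset.sum_range_ite_reflect {M : Type*} [AddCommMonoid M] (g : ℕ → M) {n c : ℕ}
    (hc : c ≤ n) : ∑ i ∈ range n, (if i < c then g (c - 1 - i) else 0) = ∑ j ∈ range c, g j := by
  rw [← sum_filter, ← sum_range_reflect g c]
  congr 1
  ext i
  simp only [mem_filter, mem_range]
  omega

noncomputable def binomWeight (n : ℕ) (p : ℝ) (k : ℕ) : ℝ :=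
  (bernsteinPolynomial ℝ n k).eval p

/-- The sign of `outwardGap n p a b` compares the ratios `f a / f (a + 1)` and `f (b + 1) / f b`
of the binomial weights `f = binomWeight n p`: it decides whether moving the pair `(a + 1, b)`
outwards to `(a, b + 1)` favours the upper index. -/
def outwardGap (n : ℕ) (p : ℝ) (a b : ℕ) : ℝ :=
  (n - a) * (n - b) * p ^ 2 - (a + 1) * (b + 1) * (1 - p) ^ 2

theorem outwardGap_add_left_le {n : ℕ} {p : ℝ} (hp : p ≤ 1 / 2) {a b : ℕ} (hab : a ≤ b) (t : ℕ) :
    outwardGap n p (a + t) b ≤ outwardGap n p a (b + t) := by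
  have hdiff : outwardGap n p a (b + t) - outwardGap n p (a + t) b = t * (b - a) * (1 - 2 * p) := by
    simp only [outwardGap]
    push_cast
    ring
  have : (0 : ℝ) ≤ t * (b - a) * (1 - 2 * p) := by
    have : (a : ℝ) ≤ b := by exact_mod_cast hab
    apply mul_nonneg (mul_nonneg _ _) <;> linarith [(t.cast_nonneg : (0 : ℝ) ≤ t)]
  linarith

/-- `reflectDiff n p c i = f (c + (i + 1)) - f (c - (i + 1))` for `f = binomWeight n p`, where the
weight at a negative index is read as `0` (the `if` replaces truncated subtraction). -/
noncomputable def reflectDiff (n : ℕ) (p : ℝ) (c i : ℕ) : ℝ :=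
  binomWeight n p (c + 1 + i) - if i < c then binomWeight n p (c - 1 - i) else 0

namespace binomWeight

variable {n : ℕ} {p : ℝ}

theorem eq_choose_mul (n : ℕ) (p : ℝ) (k : ℕ) :
    binomWeight n p k = n.choose k * p ^ k * (1 - p) ^ (n - k) := by
  simp [binomWeight, bernsteinPolynomial]

theorem eq_zero_of_lt {k : ℕ} (hk : n < k) : binomWeight n p k = 0 := by
  simp [binomWeight, bernsteinPolynomial.eq_zero_of_lt ℝ hk]

theorem nonneg (hp0 : 0 ≤ p) (hp1 : p ≤ 1) (k : ℕ) : 0 ≤ binomWeight n p k := by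
  rw [eq_choose_mul]
  have : 0 ≤ 1 - p := by linarith
  positivity

theorem pos (hp0 : 0 < p) (hp1 : p < 1) {k : ℕ} (hk : k ≤ n) : 0 < binomWeight n p k := by
  rw [eq_choose_mul]
  have : 0 < 1 - p := by linarith
  have : (0 : ℝ) < n.choose k := by exact_mod_cast Nat.choose_pos hk
  positivity

theorem sum_range (n : ℕ) (p : ℝ) : ∑ k ∈ range (n + 1), binomWeight n p k = 1 := by
  simpa [binomWeight, eval_finsetSum] using congrArg (eval p) (bernsteinPolynomial.sum ℝ n)

theorem sum_range_mul (n : ℕ) (p : ℝ) :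
    ∑ k ∈ range (n + 1), (k : ℝ) * binomWeight n p k = n * p := by
  simpa [binomWeight, eval_finsetSum] using congrArg (eval p) (bernsteinPolynomial.sum_smul ℝ n)

theorem one_sub {k : ℕ} (hk : k ≤ n) : binomWeight n (1 - p) (n - k) = binomWeight n p k := by
  simpa [binomWeight] using congrArg (eval (1 - p)) (bernsteinPolynomial.flip ℝ n k hk).symm

theorem succ_mul (n : ℕ) (p : ℝ) (k : ℕ) :
    binomWeight n p (k + 1) * ((k + 1) * (1 - p)) = binomWeight n p k * ((n - k) * p) := by
  rcases lt_or_ge k n with hk | hk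
  · obtain ⟨m, rfl⟩ := Nat.exists_eq_add_of_lt hk
    have hchoose : ((k + m + 1).choose (k + 1) : ℝ) * (k + 1) = (k + m + 1).choose k * (m + 1) := by
      have := Nat.choose_succ_right_eq (k + m + 1) k
      rw [show k + m + 1 - k = m + 1 by omega] at this
      exact_mod_cast this
    simp only [eq_choose_mul, show k + m + 1 - k = m + 1 by omega,
      show k + m + 1 - (k + 1) = m by omega]
    push_cast
    linear_combination p ^ k * p * (1 - p) ^ m * (1 - p) * hchoose
  · rw [eq_zero_of_lt (by omega)]
    rcases hk.eq_or_lt with rfl | hk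
    · simp
    · simp [eq_zero_of_lt hk]

theorem sum_range_of_le {k : ℕ} (hk : n + 1 ≤ k) : ∑ j ∈ range k, binomWeight n p j = 1 := by
  obtain ⟨t, rfl⟩ := Nat.exists_eq_add_of_le hk
  rw [sum_range_add, sum_range, sum_eq_zero fun i _ => eq_zero_of_lt (by omega), add_zero]

theorem sum_range_le_one (hp0 : 0 ≤ p) (hp1 : p ≤ 1) (k : ℕ) :
    ∑ j ∈ range k, binomWeight n p j ≤ 1 := by
  calc ∑ j ∈ range k, binomWeight n p j
      ≤ ∑ j ∈ range (k + (n + 1)), binomWeight n p j :=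
        sum_le_sum_of_subset_of_nonneg (range_subset_range.mpr (by omega))
          fun j _ _ => nonneg hp0 hp1 j
    _ = 1 := sum_range_of_le (by omega)

theorem sum_range_add_sum_range_one_sub {k : ℕ} (hk : k ≤ n) :
    ∑ j ∈ range (k + 1), binomWeight n p j + ∑ j ∈ range (n - k), binomWeight n (1 - p) j = 1 := by
  have hreflect : ∑ j ∈ range (n - k), binomWeight n (1 - p) j
      = ∑ i ∈ range (n - k), binomWeight n p (k + 1 + i) := by
    rw [← sum_range_reflect]
    refine sum_congr rfl fun i hi => ?_
    rw [mem_range] at hi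
    rw [← one_sub (by omega : k + 1 + i ≤ n)]
    congr 1
    omega
  rw [hreflect, ← sum_range_add, show k + 1 + (n - k) = n + 1 by omega, sum_range]

theorem lt_succ_of_lt_mul (hp0 : 0 < p) (hp1 : p < 1) {k : ℕ}
    (hk : (k + 1) * (1 - p) < (n - k) * p) : binomWeight n p k < binomWeight n p (k + 1) := by
  have hkn : k < n := by
    by_contra! h
    have : (n : ℝ) - k ≤ 0 := by simp [h]
    nlinarith
  have hpos := pos (n := n) hp0 hp1 hkn.le
  have hstep := succ_mul n p k
  have hw : 0 < (k + 1) * (1 - p) := by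
    have : 0 < 1 - p := by linarith
    positivity
  by_contra! h
  nlinarith [mul_lt_mul_of_pos_left hk hpos, mul_le_mul_of_nonneg_right h hw.le]

theorem outward_mul_sub (a b : ℕ) :
    ((b + 1) * (1 - p) * ((n - a) * p)) * (binomWeight n p (b + 1) - binomWeight n p a)
      = (binomWeight n p b - binomWeight n p (a + 1)) * ((a + 1) * (b + 1) * (1 - p) ^ 2)
        + binomWeight n p b * outwardGap n p a b := by
  have ha := succ_mul n p a
  have hb := succ_mul n p b
  simp only [outwardGap]
  linear_combination ((n - a) * p) * hb + ((b + 1) * (1 - p)) * ha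

theorem lt_of_outwardGap_nonneg (hp0 : 0 < p) (hp1 : p < 1) {a b : ℕ} (ha : a < n)
    (hlt : binomWeight n p (a + 1) < binomWeight n p b) (hgap : 0 ≤ outwardGap n p a b) :
    binomWeight n p a < binomWeight n p (b + 1) := by
  have hw : 0 < (b + 1) * (1 - p) * ((n - a) * p) := by
    have : (a : ℝ) < n := by exact_mod_cast ha
    have : 0 < 1 - p := by linarith
    positivity
  have hQ : 0 < ((a : ℝ) + 1) * (b + 1) * (1 - p) ^ 2 := by
    have : 0 < 1 - p := by linarith
    positivity
  have hfb : 0 ≤ binomWeight n p b := nonneg hp0.le hp1.le b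
  have := outward_mul_sub (n := n) (p := p) a b
  nlinarith [mul_pos (sub_pos.mpr hlt) hQ, mul_nonneg hfb hgap]

theorem le_of_outwardGap_nonpos (hp0 : 0 < p) (hp1 : p < 1) {a b : ℕ} (ha : a < n)
    (hle : binomWeight n p b ≤ binomWeight n p (a + 1)) (hgap : outwardGap n p a b ≤ 0) :
    binomWeight n p (b + 1) ≤ binomWeight n p a := by
  have hw : 0 < (b + 1) * (1 - p) * ((n - a) * p) := by
    have : (a : ℝ) < n := by exact_mod_cast ha
    have : 0 < 1 - p := by linarith
    positivity
  have hQ : 0 ≤ ((a : ℝ) + 1) * (b + 1) * (1 - p) ^ 2 := by positivity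
  have hfb : 0 ≤ binomWeight n p b := nonneg hp0.le hp1.le b
  have := outward_mul_sub (n := n) (p := p) a b
  nlinarith [mul_nonpos_of_nonpos_of_nonneg (sub_nonpos.mpr hle) hQ,
    mul_nonpos_of_nonneg_of_nonpos hfb hgap]

theorem lt_reflect_of_le_mul (hp0 : 0 < p) (hp : p ≤ 1 / 2) {m : ℕ} (hm : (m : ℝ) ≤ n * p) :
    ∀ j a, a + j + 1 = m → binomWeight n p a < binomWeight n p (m + j) := by
  have hp1 : p < 1 := by linarith
  have hmn : (m : ℝ) ≤ n := by nlinarith [(n.cast_nonneg : (0 : ℝ) ≤ n)]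
  intro j
  induction j with
  | zero =>
    rintro a rfl
    apply lt_succ_of_lt_mul hp0 hp1
    push_cast at hm
    nlinarith
  | succ j ih =>
    intro a ha
    have hlt := ih (a + 1) (by omega)
    refine add_assoc m j 1 ▸ lt_of_outwardGap_nonneg hp0 hp1 ?_ hlt ?_
    · have : (a : ℝ) < m := by exact_mod_cast (by omega : a < m)
      exact_mod_cast (show (a : ℝ) < n by linarith)
    · have hdecomp : outwardGap n p a (m + j)
          = (n * p + p - m) * (p * (n - m + 1) + (1 - p) * m) + (j + 1) ^ 2 * (1 - 2 * p) := by
        have : (a : ℝ) = m - j - 2 := by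
          have := congrArg (Nat.cast (R := ℝ)) ha
          push_cast at this
          linarith
        simp only [outwardGap, this]
        push_cast
        ring
      rw [hdecomp]
      have h1 : 0 ≤ n * p + p - m := by linarith
      have h2 : 0 ≤ p * (n - m + 1) + (1 - p) * m := by
        have : (0 : ℝ) ≤ m := m.cast_nonneg
        nlinarith
      have h3 : 0 ≤ (1 : ℝ) - 2 * p := by linarith
      positivity

theorem sum_range_lt_half_of_le_half (hp0 : 0 < p) (hp : p ≤ 1 / 2) {m : ℕ} (hm1 : 1 ≤ m)
    (hm : (m : ℝ) ≤ n * p) : ∑ j ∈ range m, binomWeight n p j < 1 / 2 := by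
  have hlt : ∑ j ∈ range m, binomWeight n p j < ∑ j ∈ range m, binomWeight n p (m + j) := by
    rw [← sum_range_reflect]
    exact sum_lt_sum_of_nonempty (nonempty_range_iff.mpr (by omega)) fun j hj =>
      lt_reflect_of_le_mul hp0 hp hm j _ (by rw [mem_range] at hj; omega)
  have htot := sum_range_le_one (n := n) hp0.le (by linarith) (m + m)
  rw [sum_range_add] at htot
  linarith

theorem le_reflect_of_outwardGap_nonpos (hp0 : 0 < p) (hp : p ≤ 1 / 2) {c : ℕ} (hc : c ≤ n) :
    ∀ k a, a + k + 1 = c → outwardGap n p a (c + k) ≤ 0 →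
      binomWeight n p (c + k + 1) ≤ binomWeight n p a := by
  have hp1 : p < 1 := by linarith
  intro k
  induction k with
  | zero =>
    rintro a rfl hgap
    exact le_of_outwardGap_nonpos hp0 hp1 (by omega) le_rfl hgap
  | succ k ih =>
    intro a ha hgap
    have hinner : outwardGap n p (a + 1) (c + k) ≤ 0 :=
      (outwardGap_add_left_le hp (by omega) 1).trans (by rwa [← add_assoc] at hgap)
    exact le_of_outwardGap_nonpos hp0 hp1 (by omega) (ih (a + 1) (by omega) hinner) hgap

theorem lt_reflect_of_lt (hp0 : 0 < p) (hp : p ≤ 1 / 2) {c : ℕ} (hc : c ≤ n) {a k : ℕ}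
    (hak : a + k + 1 = c) (hlt : binomWeight n p a < binomWeight n p (c + k + 1)) :
    ∀ t a', a' + t = a → binomWeight n p a' < binomWeight n p (c + k + 1 + t) := by
  have hp1 : p < 1 := by linarith
  have hgap : 0 < outwardGap n p a (c + k) := by
    by_contra! hgap
    exact (le_reflect_of_outwardGap_nonpos hp0 hp hc k a hak hgap).not_gt hlt
  intro t
  induction t with
  | zero => rintro a' rfl; exact hlt
  | succ t ih =>
    intro a' ha'
    have houter : outwardGap n p a (c + k) ≤ outwardGap n p a' (c + k + 1 + t) := by
      have := outwardGap_add_left_le (n := n) hp (by omega : a' ≤ c + k) (t + 1)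
      rwa [show a' + (t + 1) = a by omega, show c + k + (t + 1) = c + k + 1 + t by omega] at this
    exact lt_of_outwardGap_nonneg hp0 hp1 (by omega) (ih (a' + 1) (by omega)) (hgap.le.trans houter)

theorem reflectDiff_nonneg_of_pos (hp0 : 0 < p) (hp : p ≤ 1 / 2) {c : ℕ} (hc : c ≤ n) {k i : ℕ}
    (hk : 0 < reflectDiff n p c k) (hki : k ≤ i) : 0 ≤ reflectDiff n p c i := by
  have hp1 : p < 1 := by linarith
  unfold reflectDiff at hk ⊢
  by_cases hic : i < c
  · rw [if_pos (by omega)] at hk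
    rw [if_pos hic, sub_nonneg]
    have := lt_reflect_of_lt hp0 hp hc (a := c - 1 - k) (k := k) (by omega)
      (by rw [show c + k + 1 = c + 1 + k by omega]; linarith) (i - k) (c - 1 - i) (by omega)
    rw [show c + k + 1 + (i - k) = c + 1 + i by omega] at this
    exact this.le
  · rw [if_neg hic, sub_zero]
    exact nonneg hp0.le hp1.le _

theorem sum_range_reflectDiff (n : ℕ) (p : ℝ) {c : ℕ} (hc : c ≤ n) :
    ∑ i ∈ range n, reflectDiff n p c i
      = 1 - ∑ j ∈ range (c + 1), binomWeight n p j - ∑ j ∈ range c, binomWeight n p j := by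
  simp only [reflectDiff, sum_sub_distrib]
  rw [sum_range_add_one_add c fun j hj => eq_zero_of_lt hj, sum_range,
    sum_range_ite_reflect _ hc]

theorem sum_range_mul_reflectDiff (n : ℕ) (p : ℝ) {c : ℕ} (hc : c ≤ n) :
    ∑ i ∈ range n, ((i : ℝ) + 1) * reflectDiff n p c i = n * p - c := by
  set f := binomWeight n p
  have hupper : ∑ i ∈ range n, ((i : ℝ) + 1) * f (c + 1 + i)
      = ∑ j ∈ range (n + 1), ((j : ℝ) - c) * f j - ∑ j ∈ range (c + 1), ((j : ℝ) - c) * f j := by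
    rw [← sum_range_add_one_add c fun j hj => by simp [f, eq_zero_of_lt hj]]
    refine sum_congr rfl fun i _ => ?_
    push_cast
    ring
  have hlower : ∑ i ∈ range n, ((i : ℝ) + 1) * (if i < c then f (c - 1 - i) else 0)
      = ∑ j ∈ range c, ((c : ℝ) - j) * f j := by
    rw [← sum_range_ite_reflect _ hc]
    refine sum_congr rfl fun i _ => ?_
    split_ifs with hic
    · rw [Nat.cast_sub (by omega), Nat.cast_sub (by omega)]
      push_cast
      ring
    · simp
  have hmean : ∑ j ∈ range (n + 1), ((j : ℝ) - c) * f j = n * p - c := by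
    simp only [sub_mul, sum_sub_distrib, ← mul_sum, sum_range_mul, f, sum_range, mul_one]
  simp only [reflectDiff, mul_sub, sum_sub_distrib]
  rw [hupper, hlower, hmean, sum_range_succ, sub_self, zero_mul, add_zero, sub_sub,
    ← sum_add_distrib, sub_eq_self]
  exact sum_eq_zero fun j _ => by ring

theorem half_lt_sum_range_of_le_half (hp0 : 0 < p) (hp : p ≤ 1 / 2) {c : ℕ} (hc : c ≤ n)
    (hnp : n * p ≤ c) : 1 / 2 < ∑ j ∈ range (c + 1), binomWeight n p j := by
  have htails : ∑ i ∈ range n, reflectDiff n p c i ≤ 0 :=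
    sum_nonpos_of_single_crossing (w := fun i : ℕ => (i : ℝ) + 1)
      (fun i j hij => by simpa using hij)
      (fun i _ => by positivity)
      (fun k _ hk i _ hki => reflectDiff_nonneg_of_pos hp0 hp hc hk hki)
      (by rw [sum_range_mul_reflectDiff n p hc]; linarith)
  have hfc := pos hp0 (by linarith) hc
  rw [sum_range_reflectDiff n p hc] at htails
  rw [sum_range_succ] at htails ⊢
  linarith

theorem sum_range_lt_half (hp0 : 0 < p) (hp1 : p < 1) {k : ℕ} (hk : k + 1 ≤ n * p) :
    ∑ j ∈ range (k + 1), binomWeight n p j < 1 / 2 := by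
  rcases le_or_gt p (1 / 2) with hp | hp
  · exact sum_range_lt_half_of_le_half hp0 hp (by omega) (by push_cast; linarith)
  · have hkn : k + 1 ≤ n := by
      have : ((k + 1 : ℕ) : ℝ) < n + 1 := by push_cast; nlinarith
      exact_mod_cast Nat.lt_succ_iff.mp (by exact_mod_cast this)
    have hsymm := sum_range_add_sum_range_one_sub (p := p) (by omega : k ≤ n)
    have hupper := half_lt_sum_range_of_le_half (n := n) (p := 1 - p) (by linarith) (by linarith)
      (c := n - k - 1) (by omega) (by rw [Nat.sub_sub, Nat.cast_sub hkn]; push_cast; linarith)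
    rw [show n - k - 1 + 1 = n - k by omega] at hupper
    linarith

theorem half_lt_sum_range (hp0 : 0 < p) (hp1 : p < 1) {c : ℕ} (hc : n * p ≤ c) :
    1 / 2 < ∑ j ∈ range (c + 1), binomWeight n p j := by
  rcases le_or_gt n c with hnc | hcn
  · rw [sum_range_of_le (by omega)]
    norm_num
  rcases le_or_gt p (1 / 2) with hp | hp
  · exact half_lt_sum_range_of_le_half hp0 hp hcn.le hc
  · have hsymm := sum_range_add_sum_range_one_sub (p := p) hcn.le
    have hlower := sum_range_lt_half_of_le_half (n := n) (p := 1 - p) (by linarith) (by linarith)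
      (m := n - c) (by omega) (by rw [Nat.cast_sub hcn.le]; linarith)
    linarith

end binomWeight

theorem stmt_8_general (N : ℕ) (xA xB : ℝ)
    (hA : xA ∈ Set.Ioo (0:ℝ) 1) (hB : xB ∈ Set.Ioo (0:ℝ) 1) (hAB : xA ≤ xB)
    (p : ℝ → ℕ → ℝ)
    (hp : ∀ x k, p x k = (N.choose k : ℝ) * x ^ k * (1 - x) ^ (N - k))
    (kstar : ℕ)
    (hgt : 1 < ∑ j ∈ Finset.range (kstar + 1), (p xA j + p xB j))
    (hleast : ∀ k < kstar, (∑ j ∈ Finset.range (k + 1), (p xA j + p xB j)) ≤ 1) :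
    ⌊xA * N⌋ ≤ (kstar : ℤ) ∧ (kstar : ℤ) ≤ ⌈xB * N⌉ := by
  obtain rfl : p = binomWeight N :=
    funext₂ fun x k => (hp x k).trans (binomWeight.eq_choose_mul N x k).symm
  have hNA : (N : ℝ) * xA ≤ N * xB := mul_le_mul_of_nonneg_left hAB N.cast_nonneg
  rw [sum_add_distrib] at hgt
  constructor
  · by_contra! hlt
    have hk : (kstar : ℝ) + 1 ≤ N * xA := by
      have := Int.le_floor.mp (Int.add_one_le_iff.mpr hlt)
      push_cast at this
      linarith
    linarith [binomWeight.sum_range_lt_half hA.1 hA.2 hk,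
      binomWeight.sum_range_lt_half hB.1 hB.2 (hk.trans hNA)]
  · by_contra! hlt
    have hpos : 0 ≤ ⌈xB * N⌉ := Int.ceil_nonneg (mul_nonneg hB.1.le N.cast_nonneg)
    have hc : (N : ℝ) * xB ≤ (kstar - 1 : ℕ) := by
      have := Int.ceil_le.mp (show ⌈xB * N⌉ ≤ ((kstar - 1 : ℕ) : ℤ) by omega)
      push_cast at this
      linarith
    have := hleast (kstar - 1) (by omega)
    rw [sum_add_distrib] at this
    linarith [binomWeight.half_lt_sum_range hA.1 hA.2 (hNA.trans hc),
      binomWeight.half_lt_sum_range hB.1 hB.2 hc]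

/-- Bounds on the equilibrium threshold of the Binomial Fisher game: if `k*` is the least
`k ∈ {0,…,N}` with `Σ_{j≤k} (p_j(x_A) + p_j(x_B)) > 1` for the binomial weights
`p_k(x) = C(N,k)·x^k·(1−x)^{N−k}`, then `⌊x_A·N⌋ ≤ k* ≤ ⌈x_B·N⌉`. -/
theorem stmt_8 (N : ℕ) (xA xB : ℝ)
    (hA : xA ∈ Set.Ioo (0:ℝ) 1) (hB : xB ∈ Set.Ioo (0:ℝ) 1) (hAB : xA ≤ xB)
    (p : ℝ → ℕ → ℝ)
    (hp : ∀ x k, p x k = (N.choose k : ℝ) * x ^ k * (1 - x) ^ (N - k))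
    (kstar : ℕ) (hk : kstar ≤ N)
    (hgt : 1 < ∑ j ∈ Finset.range (kstar + 1), (p xA j + p xB j))
    (hleast : ∀ k < kstar, (∑ j ∈ Finset.range (k + 1), (p xA j + p xB j)) ≤ 1) :
    ⌊xA * N⌋ ≤ (kstar : ℤ) ∧ (kstar : ℤ) ≤ ⌈xB * N⌉ :=
  stmt_8_general N xA xB hA hB hAB p hp kstar hgt hleast
end

section
/- For every real a with −1 < a < 1, the integral ∫_{−∞}^{∞} e^{a·t}/cosh(t) dt converges and equals π / cos(π·a/2). -/
/-!
The substitution `x = sigmoid (2t) = eᵗ / (2 cosh t)`, for which `1 - x = e⁻ᵗ / (2 cosh t)` and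
`dx = 2x(1 - x) dt`, turns `∫ e^{(u-v)t} / (2 cosh t)^{u+v} dt` into half the Beta integral
`B(u, v) = Γ(u)Γ(v)/Γ(u+v)`. For `u = (1 + a)/2` and `v = 1 - u` this is the claim, by the
reflection formula `Γ(u)Γ(1 - u) = π / sin(πu)`.
-/

open MeasureTheory Real Set

lemma ofReal_rpow_mul_one_sub_rpow {x : ℝ} (hx : x ∈ Icc 0 1) (u v : ℝ) :
    ((x ^ (u - 1) * (1 - x) ^ (v - 1) : ℝ) : ℂ) =
      (x : ℂ) ^ ((u : ℂ) - 1) * (1 - (x : ℂ)) ^ ((v : ℂ) - 1) := by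
  rw [Complex.ofReal_mul, Complex.ofReal_cpow hx.1, Complex.ofReal_cpow (sub_nonneg.2 hx.2)]
  push_cast
  rfl

section BetaIntegral

variable {u v : ℝ}

lemma integrableOn_rpow_mul_one_sub_rpow (hu : 0 < u) (hv : 0 < v) :
    IntegrableOn (fun x : ℝ => x ^ (u - 1) * (1 - x) ^ (v - 1)) (Ioo 0 1) := by
  have hC := (intervalIntegrable_iff_integrableOn_Ioc_of_le zero_le_one).1
    (Complex.betaIntegral_convergent (u := u) (v := v) (by simpa) (by simpa))
  have hR := (hC.mono_set Ioo_subset_Ioc_self).congr_fun (fun x hx =>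
    (ofReal_rpow_mul_one_sub_rpow (Ioo_subset_Icc_self hx) u v).symm) measurableSet_Ioo
  exact hR.re

lemma integral_rpow_mul_one_sub_rpow (hu : 0 < u) (hv : 0 < v) :
    ∫ x in Ioo (0 : ℝ) 1, x ^ (u - 1) * (1 - x) ^ (v - 1) =
      Gamma u * Gamma v / Gamma (u + v) := by
  have hB := Complex.betaIntegral_eq_Gamma_mul_div u v (by simpa) (by simpa)
  rw [Complex.betaIntegral, intervalIntegral.integral_of_le zero_le_one,
    integral_Ioc_eq_integral_Ioo, ← setIntegral_congr_fun measurableSet_Ioo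
      (fun x hx => ofReal_rpow_mul_one_sub_rpow (Ioo_subset_Icc_self hx) u v),
    integral_complex_ofReal, ← Complex.ofReal_add] at hB
  simp only [Complex.Gamma_ofReal] at hB
  exact_mod_cast hB

end BetaIntegral

lemma image_univ_sigmoid : sigmoid '' univ = Ioo 0 1 := by
  rw [image_univ, range_sigmoid]

lemma abs_deriv_sigmoid_smul_rpow_mul_one_sub_rpow (u v t : ℝ) :
    |sigmoid t * (1 - sigmoid t)| • (sigmoid t ^ (u - 1) * (1 - sigmoid t) ^ (v - 1)) =
      sigmoid t ^ u * (1 - sigmoid t) ^ v := by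
  have h0 := sigmoid_pos t
  have h1 : 0 < 1 - sigmoid t := sub_pos.2 (sigmoid_lt_one t)
  rw [smul_eq_mul, abs_of_pos (mul_pos h0 h1), rpow_sub_one h0.ne', rpow_sub_one h1.ne']
  field_simp

section SigmoidSubstitution

variable {u v : ℝ}

lemma integrable_sigmoid_rpow_mul_one_sub_sigmoid_rpow (hu : 0 < u) (hv : 0 < v) :
    Integrable (fun t => sigmoid t ^ u * (1 - sigmoid t) ^ v) := by
  have h := (integrableOn_image_iff_integrableOn_abs_deriv_smul MeasurableSet.univ
    (fun t _ => (hasDerivAt_sigmoid t).hasDerivWithinAt) sigmoid_injective.injOn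
    (fun x : ℝ => x ^ (u - 1) * (1 - x) ^ (v - 1))).1
    (image_univ_sigmoid ▸ integrableOn_rpow_mul_one_sub_rpow hu hv)
  simpa only [integrableOn_univ, abs_deriv_sigmoid_smul_rpow_mul_one_sub_rpow] using h

lemma integral_sigmoid_rpow_mul_one_sub_sigmoid_rpow (hu : 0 < u) (hv : 0 < v) :
    ∫ t, sigmoid t ^ u * (1 - sigmoid t) ^ v = Gamma u * Gamma v / Gamma (u + v) := by
  rw [← integral_rpow_mul_one_sub_rpow hu hv, ← image_univ_sigmoid,
    integral_image_eq_integral_abs_deriv_smul MeasurableSet.univ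
      (fun t _ => (hasDerivAt_sigmoid t).hasDerivWithinAt) sigmoid_injective.injOn,
    Measure.restrict_univ]
  simp only [abs_deriv_sigmoid_smul_rpow_mul_one_sub_rpow]

end SigmoidSubstitution

lemma sigmoid_two_mul (t : ℝ) : sigmoid (2 * t) = exp t / (2 * cosh t) := by
  rw [sigmoid_def, cosh_eq, mul_div_cancel₀ _ two_ne_zero,
    show -(2 * t) = -t - t by ring, exp_sub]
  field_simp

lemma one_sub_sigmoid_two_mul (t : ℝ) : 1 - sigmoid (2 * t) = exp (-t) / (2 * cosh t) := by
  rw [← sigmoid_neg, ← mul_neg, sigmoid_two_mul, cosh_neg]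

lemma sigmoid_two_mul_rpow_mul (u v t : ℝ) :
    sigmoid (2 * t) ^ u * (1 - sigmoid (2 * t)) ^ v =
      exp ((u - v) * t) / (2 * cosh t) ^ (u + v) := by
  have hc : 0 < 2 * cosh t := by positivity
  rw [one_sub_sigmoid_two_mul, sigmoid_two_mul, div_rpow (exp_pos _).le hc.le,
    div_rpow (exp_pos _).le hc.le, ← exp_mul, ← exp_mul, rpow_add hc, div_mul_div_comm,
    ← exp_add]
  congr 2; ring

section CoshIntegral

variable {u v : ℝ}

lemma integrable_exp_mul_div_two_mul_cosh_rpow (hu : 0 < u) (hv : 0 < v) :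
    Integrable (fun t => exp ((u - v) * t) / (2 * cosh t) ^ (u + v)) := by
  simpa only [sigmoid_two_mul_rpow_mul] using
    (integrable_sigmoid_rpow_mul_one_sub_sigmoid_rpow hu hv).comp_mul_left' two_ne_zero

lemma integral_exp_mul_div_two_mul_cosh_rpow (hu : 0 < u) (hv : 0 < v) :
    ∫ t, exp ((u - v) * t) / (2 * cosh t) ^ (u + v) =
      Gamma u * Gamma v / (2 * Gamma (u + v)) := by
  simp_rw [← sigmoid_two_mul_rpow_mul]
  rw [Measure.integral_comp_mul_left (fun t => sigmoid t ^ u * (1 - sigmoid t) ^ v),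
    integral_sigmoid_rpow_mul_one_sub_sigmoid_rpow hu hv, smul_eq_mul,
    abs_of_pos (by norm_num : (0 : ℝ) < 2⁻¹)]
  ring

end CoshIntegral

/-- For `−1 < a < 1`, the integral `∫ e^{a·t}/cosh t dt` over `ℝ` converges and equals
`π / cos(π·a/2)`. -/
theorem stmt_11 (a : ℝ) (ha : -1 < a) (ha' : a < 1) :
    MeasureTheory.Integrable (fun t : ℝ => Real.exp (a * t) / Real.cosh t) ∧
    (∫ t : ℝ, Real.exp (a * t) / Real.cosh t) = Real.pi / Real.cos (Real.pi * a / 2) := by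
  set u := (1 + a) / 2 with hu_def
  have hu : 0 < u := by linarith [hu_def]
  have hv : 0 < 1 - u := by linarith [hu_def]
  have hdiff : u - (1 - u) = a := by ring
  have hsum : u + (1 - u) = 1 := by ring
  have hintegrand : (fun t => exp (a * t) / cosh t) =
      fun t => 2 * (exp ((u - (1 - u)) * t) / (2 * cosh t) ^ (u + (1 - u))) := by
    ext t
    rw [hdiff, hsum, rpow_one]
    field_simp
  have hsin : sin (π * u) = cos (π * a / 2) := by
    rw [← sin_add_pi_div_two]; congr 1; ring
  rw [hintegrand]
  refine ⟨(integrable_exp_mul_div_two_mul_cosh_rpow hu hv).const_mul 2, ?_⟩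
  rw [integral_const_mul, integral_exp_mul_div_two_mul_cosh_rpow hu hv, hsum, Gamma_one,
    Gamma_mul_Gamma_one_sub, hsin]
  ring
end

section
/- For every real α with 0 < α < 1, the integral ∫_{−∞}^{∞} e^{−α·τ}·(τ + log(1 + e^{−τ})) dτ converges and equals π / (α·sin(π·α)). -/
open Real MeasureTheory Set ProbabilityTheory

/-!
Since `τ + log (1 + e^{-τ}) = log (1 + e^τ)`, integrating by parts against `e^{-ατ}` turns the
integral into `α⁻¹ ∫ e^{(1-α)τ} / (1 + e^τ) dτ`. The substitution `u = σ(τ)`, `σ` the logistic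
sigmoid with `σ' = σ(τ) σ(-τ)`, makes this the Beta integral `B(1-α, α) = Γ(1-α) Γ(α)`, and the
reflection formula gives `π / sin (π α)`.
-/

lemma integrable_of_norm_le_exp {f : ℝ → ℝ} (hf : Continuous f) {a b C D : ℝ}
    (ha : 0 < a) (hb : 0 < b) (h_left : ∀ τ ≤ 0, ‖f τ‖ ≤ C * exp (a * τ))
    (h_right : ∀ τ ≥ 0, ‖f τ‖ ≤ D * exp (-b * τ)) :
    Integrable f := by
  rw [← integrableOn_univ, ← Iic_union_Ioi (a := (0 : ℝ))]
  refine IntegrableOn.union ?_ ?_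
  · refine ((integrableOn_exp_mul_Iic ha 0).const_mul C).mono' hf.aestronglyMeasurable ?_
    filter_upwards [ae_restrict_mem measurableSet_Iic] with τ hτ using h_left τ hτ
  · refine ((integrableOn_exp_mul_Ioi (neg_neg_of_pos hb) 0).const_mul D).mono'
      hf.aestronglyMeasurable ?_
    filter_upwards [ae_restrict_mem measurableSet_Ioi] with τ hτ using h_right τ (le_of_lt hτ)

lemma integral_Ioo_rpow_mul_one_sub_rpow {a b : ℝ} (ha : 0 < a) (hb : 0 < b) :
    ∫ x in Ioo (0 : ℝ) 1, x ^ (a - 1) * (1 - x) ^ (b - 1) = beta a b := by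
  rw [beta_eq_betaIntegralReal a b ha hb, Complex.betaIntegral,
    intervalIntegral.integral_of_le zero_le_one, ← integral_Ioc_eq_integral_Ioo,
    ← RCLike.re_to_complex, ← integral_re]
  · refine setIntegral_congr_fun measurableSet_Ioc fun x ⟨hx0, hx1⟩ ↦ ?_
    norm_cast
    rw [← Complex.ofReal_cpow hx0.le, ← Complex.ofReal_cpow (by linarith), RCLike.re_to_complex,
      Complex.re_mul_ofReal, Complex.ofReal_re]
  · have := Complex.betaIntegral_convergent (u := a) (v := b) (by simpa) (by simpa)
    rwa [intervalIntegrable_iff_integrableOn_Ioc_of_le zero_le_one] at this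

lemma integral_sigmoid_rpow_mul_sigmoid_neg_rpow {a b : ℝ} (ha : 0 < a) (hb : 0 < b) :
    ∫ τ, sigmoid τ ^ a * sigmoid (-τ) ^ b = beta a b := by
  have hsub := integral_image_eq_integral_abs_deriv_smul MeasurableSet.univ
    (fun τ _ ↦ (hasDerivAt_sigmoid τ).hasDerivWithinAt) sigmoid_injective.injOn
    (fun x ↦ x ^ (a - 1) * (1 - x) ^ (b - 1))
  rw [image_univ, range_sigmoid, integral_Ioo_rpow_mul_one_sub_rpow ha hb, setIntegral_univ] at hsub
  rw [hsub]
  congr 1 with τ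
  have h0 := sigmoid_pos τ
  have h1 := sigmoid_pos (-τ)
  rw [← sigmoid_neg, abs_of_pos (mul_pos h0 h1), smul_eq_mul, rpow_sub_one h0.ne',
    rpow_sub_one h1.ne']
  field_simp

lemma exp_mul_div_one_add_exp (s τ : ℝ) :
    exp (s * τ) / (1 + exp τ) = sigmoid τ ^ s * sigmoid (-τ) ^ (1 - s) := by
  have hpos := sigmoid_pos (-τ)
  have hσ : sigmoid τ = exp τ * sigmoid (-τ) := by
    simpa [mul_comm] using (sigmoid_mul_rexp_neg (-τ)).symm
  rw [hσ, mul_rpow (exp_pos τ).le hpos.le, ← exp_mul, mul_assoc, ← rpow_add hpos,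
    add_sub_cancel, rpow_one, sigmoid_def, neg_neg, mul_comm τ s, div_eq_mul_inv]

lemma integral_exp_mul_div_one_add_exp {s : ℝ} (hs0 : 0 < s) (hs1 : s < 1) :
    ∫ τ, exp (s * τ) / (1 + exp τ) = π / sin (π * s) := by
  simp_rw [exp_mul_div_one_add_exp s]
  rw [integral_sigmoid_rpow_mul_sigmoid_neg_rpow hs0 (by linarith), beta, add_sub_cancel,
    Gamma_one, div_one, Gamma_mul_Gamma_one_sub]

lemma integrable_exp_mul_div_one_add_exp {s : ℝ} (hs0 : 0 < s) (hs1 : s < 1) :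
    Integrable fun τ ↦ exp (s * τ) / (1 + exp τ) := by
  refine integrable_of_norm_le_exp (C := 1) (D := 1)
    (.div (by fun_prop) (by fun_prop) fun τ ↦ by positivity) hs0 (sub_pos.2 hs1)
    (fun τ _ ↦ ?_) (fun τ _ ↦ ?_)
  · rw [norm_of_nonneg (by positivity), one_mul, div_le_iff₀ (by positivity)]
    exact le_mul_of_one_le_right (exp_pos _).le (by linarith [exp_pos τ])
  · rw [norm_of_nonneg (by positivity), one_mul, div_le_iff₀ (by positivity)]
    calc exp (s * τ) = exp (-(1 - s) * τ) * exp τ := by rw [← exp_add]; ring_nf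
      _ ≤ exp (-(1 - s) * τ) * (1 + exp τ) := by gcongr; linarith

lemma add_log_one_add_exp_neg (τ : ℝ) : τ + log (1 + exp (-τ)) = log (1 + exp τ) := by
  have h : 1 + exp τ = exp τ * (1 + exp (-τ)) := by
    rw [mul_add, mul_one, ← exp_add, add_neg_cancel, exp_zero, add_comm]
  rw [h, log_mul (exp_pos τ).ne' (by positivity), log_exp]

lemma log_one_add_exp_nonneg (τ : ℝ) : 0 ≤ log (1 + exp τ) :=
  log_nonneg (by linarith [exp_pos τ])

lemma log_one_add_exp_le_exp (τ : ℝ) : log (1 + exp τ) ≤ exp τ := by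
  linarith [log_le_sub_one_of_pos (x := 1 + exp τ) (by positivity)]

lemma log_one_add_exp_le_add_one {τ : ℝ} (hτ : 0 ≤ τ) : log (1 + exp τ) ≤ τ + 1 := by
  rw [← add_log_one_add_exp_neg]
  have := log_one_add_exp_le_exp (-τ)
  have := exp_le_one_iff.2 (neg_nonpos.2 hτ)
  linarith

lemma integrable_exp_neg_mul_mul_log_one_add_exp {α : ℝ} (h0 : 0 < α) (h1 : α < 1) :
    Integrable fun τ ↦ exp (-α * τ) * log (1 + exp τ) := by
  refine integrable_of_norm_le_exp (C := 1) (D := 2 / α)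
    (.mul (by fun_prop) (.log (by fun_prop) fun τ ↦ by positivity)) (sub_pos.2 h1) (half_pos h0)
    (fun τ _ ↦ ?_) (fun τ hτ ↦ ?_) <;>
    rw [norm_of_nonneg (mul_nonneg (exp_pos _).le (log_one_add_exp_nonneg τ))]
  · calc exp (-α * τ) * log (1 + exp τ) ≤ exp (-α * τ) * exp τ := by
          gcongr; exact log_one_add_exp_le_exp τ
      _ = 1 * exp ((1 - α) * τ) := by rw [← exp_add]; ring_nf
  · have hτ' : τ + 1 ≤ 2 / α * exp (α / 2 * τ) := by
      have := add_one_le_exp (α / 2 * τ)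
      have : 1 ≤ 2 / α := by rw [le_div_iff₀ h0]; linarith
      calc τ + 1 ≤ 2 / α * (α / 2 * τ + 1) := by field_simp; nlinarith
        _ ≤ 2 / α * exp (α / 2 * τ) := by gcongr
    calc exp (-α * τ) * log (1 + exp τ) ≤ exp (-α * τ) * (2 / α * exp (α / 2 * τ)) := by
          gcongr; exact (log_one_add_exp_le_add_one hτ).trans hτ'
      _ = 2 / α * exp (-(α / 2) * τ) := by rw [mul_left_comm, ← exp_add]; ring_nf

lemma integral_exp_neg_mul_mul_log_one_add_exp {α : ℝ} (h0 : 0 < α) (h1 : α < 1) :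
    ∫ τ, exp (-α * τ) * log (1 + exp τ) = α⁻¹ * ∫ τ, exp ((1 - α) * τ) / (1 + exp τ) := by
  let u τ := log (1 + exp τ)
  let u' τ := exp τ / (1 + exp τ)
  let v τ := -α⁻¹ * exp (-α * τ)
  let v' τ := exp (-α * τ)
  have hu : ∀ τ, HasDerivAt u (u' τ) τ := fun τ ↦
    ((hasDerivAt_exp τ).const_add 1).log (by positivity)
  have hv : ∀ τ, HasDerivAt v (v' τ) τ := fun τ ↦ by
    refine ((((hasDerivAt_id τ).const_mul (-α)).exp).const_mul (-α⁻¹)).congr_deriv ?_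
    simp only [id, v']
    field_simp
  have huv' : u * v' = fun τ ↦ exp (-α * τ) * log (1 + exp τ) := funext fun τ ↦ mul_comm _ _
  have hu'v : u' * v = fun τ ↦ -α⁻¹ * (exp ((1 - α) * τ) / (1 + exp τ)) := by
    ext τ
    simp only [Pi.mul_apply, u', v]
    rw [show (1 - α) * τ = τ + -α * τ by ring, exp_add]
    ring
  have huv : u * v = fun τ ↦ -α⁻¹ * (exp (-α * τ) * log (1 + exp τ)) :=
    funext fun τ ↦ by simp only [Pi.mul_apply, u, v]; ring
  have hf := integrable_exp_neg_mul_mul_log_one_add_exp h0 h1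
  have hibp := integral_mul_deriv_eq_deriv_mul_of_integrable (fun τ _ ↦ hu τ) (fun τ _ ↦ hv τ)
    (huv' ▸ hf)
    (hu'v ▸ (integrable_exp_mul_div_one_add_exp (by linarith) (by linarith)).const_mul _)
    (huv ▸ hf.const_mul _)
  calc _ = ∫ τ, u τ * v' τ := integral_congr_ae (.of_forall fun τ ↦ mul_comm _ _)
    _ = -∫ τ, (u' * v) τ := hibp
    _ = _ := by rw [hu'v, integral_const_mul, neg_mul, neg_neg]

/-- For `0 < α < 1`, the integral `∫ e^{−α·τ}·(τ + log(1 + e^{−τ})) dτ` over `ℝ`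
converges and equals `π / (α·sin(π·α))`. -/
theorem stmt_12 (α : ℝ) (h1 : 0 < α) (h2 : α < 1) :
    MeasureTheory.Integrable
      (fun τ : ℝ => Real.exp (-α * τ) * (τ + Real.log (1 + Real.exp (-τ)))) ∧
    (∫ τ : ℝ, Real.exp (-α * τ) * (τ + Real.log (1 + Real.exp (-τ))))
      = Real.pi / (α * Real.sin (Real.pi * α)) := by
  simp_rw [add_log_one_add_exp_neg]
  refine ⟨integrable_exp_neg_mul_mul_log_one_add_exp h1 h2, ?_⟩
  rw [integral_exp_neg_mul_mul_log_one_add_exp h1 h2,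
    integral_exp_mul_div_one_add_exp (by linarith) (by linarith), mul_sub, mul_one, sin_pi_sub,
    inv_mul_eq_div, div_div, mul_comm]
end

section
/- Let a be a nonzero real number and ω ∈ (0, 2π). Then the symmetric partial sums Σ_{m=−M}^{M} e^{i·m·ω}/(a − i·m) of complex numbers converge, as M → ∞, to (2π/(e^{2π·a} − 1))·e^{a·ω}. -/
/-!
Since `∫₀^{2π} e^{at} e^{-imt} dt = (e^{2πa} - 1)/(a - im)`, the partial sum equals
`(e^{2πa} - 1)⁻¹ ∫₀^{2π} e^{at} D_M(ω - t) dt`, where `D_M(x) = ∑_{|m| ≤ M} e^{imx}` is the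
Dirichlet kernel. As `∫₀^{2π} D_M(ω - t) dt = 2π` and `(e^{ix} - 1) D_M(x) = e^{i(M+1)x} - e^{-iMx}`,
the distance to `2π e^{aω}` is a combination of two Fourier integrals of
`Q(t) = (e^{at} - e^{aω}) / (e^{i(ω-t)} - 1)`. Because `ω` lies in the open interval and `e^{at}`
is differentiable at `ω`, `Q` extends continuously to `[0, 2π]`, so both integrals tend to `0` by
the Riemann–Lebesgue lemma.
-/

open Complex Filter MeasureTheory Set Topology
open scoped Real

theorem geom_sum_Icc_neg_mul {K : Type*} [Field K] {z : K} (hz : z ≠ 0) (M : ℕ) :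
    (∑ m ∈ Finset.Icc (-(M : ℤ)) M, z ^ m) * (z - 1) = z ^ ((M : ℤ) + 1) - z ^ (-(M : ℤ)) := by
  induction M with
  | zero => simp
  | succ M ih =>
    have hIcc : Finset.Icc (-((M + 1 : ℕ) : ℤ)) ((M + 1 : ℕ) : ℤ) =
        insert (-((M : ℤ) + 1)) (insert ((M : ℤ) + 1) (Finset.Icc (-(M : ℤ)) M)) := by
      ext; simp; omega
    rw [hIcc, Finset.sum_insert (by simp; omega), Finset.sum_insert (by simp)]
    push_cast
    rw [neg_add, zpow_add₀ hz, zpow_add_one₀ hz ((M : ℤ) + 1), zpow_neg_one]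
    linear_combination ih + z ^ (-(M : ℤ)) * mul_inv_cancel₀ hz

noncomputable def dirichletKernel (M : ℕ) (x : ℝ) : ℂ :=
  ∑ m ∈ Finset.Icc (-(M : ℤ)) M, exp (m * x * I)

@[fun_prop]
theorem continuous_dirichletKernel (M : ℕ) : Continuous (dirichletKernel M) := by
  unfold dirichletKernel
  fun_prop

theorem dirichletKernel_mul_exp_sub_one (M : ℕ) (x : ℝ) :
    dirichletKernel M x * (exp (x * I) - 1) = exp ((M + 1) * x * I) - exp (-M * x * I) := by
  have hpow (m : ℤ) : exp (m * x * I) = exp (x * I) ^ m := by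
    rw [← exp_int_mul]; ring_nf
  have h1 : exp ((M + 1) * x * I) = exp (((M + 1 : ℤ) : ℂ) * x * I) := by push_cast; rfl
  have h2 : exp (-M * x * I) = exp (((-M : ℤ) : ℂ) * x * I) := by push_cast; rfl
  simp only [dirichletKernel, hpow, h1, h2]
  exact geom_sum_Icc_neg_mul (exp_ne_zero _) M

theorem integral_exp_mul_exp_int_mul_I (c : ℂ) (m : ℤ) (h : c ≠ m * I) :
    ∫ t in (0 : ℝ)..2 * π, exp (c * t) * exp (-(m * t * I)) =
      (exp (2 * π * c) - 1) / (c - m * I) := by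
  have hexp (t : ℝ) : exp (c * t) * exp (-(m * t * I)) = exp ((c - m * I) * t) := by
    rw [← exp_add]; ring_nf
  simp_rw [hexp]
  rw [integral_exp_mul_complex (sub_ne_zero.mpr h)]
  have hperiod : (c - m * I) * ((2 * π : ℝ) : ℂ) = 2 * π * c + (-m : ℤ) * (2 * π * I) := by
    push_cast; ring
  rw [hperiod, exp_add, exp_int_mul_two_pi_mul_I]
  simp

theorem integral_mul_dirichletKernel_sub {f : ℝ → ℂ} {a b : ℝ}
    (hf : IntervalIntegrable f volume a b) (M : ℕ) (ω : ℝ) :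
    ∫ t in a..b, f t * dirichletKernel M (ω - t) =
      ∑ m ∈ Finset.Icc (-(M : ℤ)) M, exp (m * ω * I) * ∫ t in a..b, f t * exp (-(m * t * I)) := by
  have hexp (m : ℤ) (t : ℝ) :
      f t * exp (m * ↑(ω - t) * I) = exp (m * ω * I) * (f t * exp (-(m * t * I))) := by
    rw [mul_left_comm, ← exp_add]; push_cast; ring_nf
  simp only [dirichletKernel, Finset.mul_sum, hexp]
  rw [intervalIntegral.integral_finsetSum fun m _ =>
    (hf.mul_continuousOn (by fun_prop)).const_mul _]
  simp only [intervalIntegral.integral_const_mul]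

theorem integral_dirichletKernel_sub (M : ℕ) (ω : ℝ) :
    ∫ t in (0 : ℝ)..2 * π, dirichletKernel M (ω - t) = 2 * π := by
  have h := integral_mul_dirichletKernel_sub (f := fun _ => 1) (a := 0) (b := 2 * π)
    intervalIntegrable_const M ω
  simp only [one_mul] at h
  rw [h, Finset.sum_eq_single_of_mem 0 (by simp)]
  · simp
  · intro m _ hm
    simpa using integral_exp_mul_exp_int_mul_I 0 m (by simpa [eq_comm] using hm)

theorem tendsto_setIntegral_mul_exp_cocompact (f : ℝ → ℂ) {s : Set ℝ} (hs : MeasurableSet s) :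
    Tendsto (fun w : ℝ => ∫ t in s, f t * exp (-(w * t * I))) (cocompact ℝ) (𝓝 0) := by
  have hscale : Tendsto (fun w : ℝ => w * (2 * π)⁻¹) (cocompact ℝ) (cocompact ℝ) :=
    tendsto_cocompact_mul_right₀ (by positivity)
  refine ((Real.tendsto_integral_exp_smul_cocompact (s.indicator f)).comp hscale).congr fun w => ?_
  rw [Function.comp_apply, ← integral_indicator hs]
  congr 1 with t
  by_cases ht : t ∈ s
  · rw [indicator_of_mem ht, indicator_of_mem ht, Circle.smul_def, Real.fourierChar_apply,
      smul_eq_mul, mul_comm]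
    congr 2
    push_cast
    field_simp
  · rw [indicator_of_notMem ht, indicator_of_notMem ht, smul_zero]

theorem tendsto_intervalIntegral_mul_exp_cocompact (f : ℝ → ℂ) (a b : ℝ) :
    Tendsto (fun w : ℝ => ∫ t in a..b, f t * exp (-(w * t * I))) (cocompact ℝ) (𝓝 0) := by
  rw [← sub_zero 0]
  exact (tendsto_setIntegral_mul_exp_cocompact f measurableSet_Ioc).sub
    (tendsto_setIntegral_mul_exp_cocompact f measurableSet_Ioc)

theorem tendsto_intervalIntegral_mul_exp_sub_cocompact (f : ℝ → ℂ) (a b ω : ℝ) :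
    Tendsto (fun w : ℝ => ∫ t in a..b, f t * exp (w * ↑(ω - t) * I)) (cocompact ℝ) (𝓝 0) := by
  refine squeeze_zero_norm (fun w => le_of_eq ?_)
    (by simpa using (tendsto_intervalIntegral_mul_exp_cocompact f a b).norm)
  have hexp (t : ℝ) :
      f t * exp (w * ↑(ω - t) * I) = exp (↑(w * ω) * I) * (f t * exp (-(w * t * I))) := by
    rw [mul_left_comm, ← exp_add]; push_cast; ring_nf
  simp_rw [hexp, intervalIntegral.integral_const_mul, norm_mul, norm_exp_ofReal_mul_I, one_mul]

theorem exp_mul_I_ne_one {x : ℝ} (hx0 : x ≠ 0) (hx : |x| < 2 * π) : exp (x * I) ≠ 1 := by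
  rw [Ne, exp_eq_one_iff]
  rintro ⟨n, hn⟩
  have hxn : x = n * (2 * π) := by simpa using congrArg im hn
  have hn_abs : |(n : ℝ)| < 1 := by
    rw [hxn, abs_mul, abs_of_pos (by positivity : (0 : ℝ) < 2 * π)] at hx
    nlinarith [Real.pi_pos]
  have hn0 : n = 0 := Int.abs_lt_one_iff.mp (by exact_mod_cast hn_abs)
  simp [hxn, hn0] at hx0

theorem exists_continuousOn_sub_eq_mul_exp_sub_one {f : ℝ → ℂ} {ω : ℝ} (hω : ω ∈ Ioo 0 (2 * π))
    (hf : ContinuousOn f (Icc 0 (2 * π))) (hfω : DifferentiableAt ℝ f ω) :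
    ∃ Q : ℝ → ℂ, ContinuousOn Q (Icc 0 (2 * π)) ∧
      ∀ t ∈ Icc 0 (2 * π), f t - f ω = Q t * (exp (↑(ω - t) * I) - 1) := by
  have hg : HasDerivAt (fun t : ℝ => exp (↑(ω - t) * I)) (-I) ω := by
    simpa using (((hasDerivAt_id ω).const_sub ω).ofReal_comp.mul_const I).cexp
  set g : ℝ → ℂ := fun t => exp (↑(ω - t) * I)
  have hgω : g ω = 1 := by simp [g]
  have hslope_ne : ∀ t ∈ Icc 0 (2 * π), dslope g ω t ≠ 0 := by
    intro t ht
    rcases eq_or_ne t ω with rfl | hne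
    · simp [dslope_same, hg.deriv]
    · rw [dslope_of_ne _ hne, slope_def_module, hgω]
      refine smul_ne_zero (inv_ne_zero (sub_ne_zero.mpr hne)) (sub_ne_zero.mpr ?_)
      exact exp_mul_I_ne_one (sub_ne_zero.mpr hne.symm)
        (abs_sub_lt_iff.mpr ⟨by linarith [hω.2, ht.1], by linarith [hω.1, ht.2]⟩)
  have hnhds : Icc 0 (2 * π) ∈ 𝓝 ω := Icc_mem_nhds hω.1 hω.2
  refine ⟨fun t => dslope f ω t / dslope g ω t,
    ((continuousOn_dslope hnhds).mpr ⟨hf, hfω⟩).div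
      ((continuousOn_dslope hnhds).mpr ⟨by fun_prop, hg.differentiableAt⟩) hslope_ne,
    fun t ht => ?_⟩
  rw [show exp (↑(ω - t) * I) - 1 = g t - g ω by rw [hgω], ← sub_smul_dslope f ω t,
    ← sub_smul_dslope g ω t, real_smul, real_smul]
  field_simp [hslope_ne t ht]

theorem tendsto_integral_mul_dirichletKernel_sub {f : ℝ → ℂ} {ω : ℝ} (hω : ω ∈ Ioo 0 (2 * π))
    (hf : ContinuousOn f (Icc 0 (2 * π))) (hfω : DifferentiableAt ℝ f ω) :
    Tendsto (fun M : ℕ => ∫ t in (0 : ℝ)..2 * π, f t * dirichletKernel M (ω - t)) atTop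
      (𝓝 (2 * π * f ω)) := by
  obtain ⟨Q, hQ, hfQ⟩ := exists_continuousOn_sub_eq_mul_exp_sub_one hω hf hfω
  set R : ℝ → ℂ := fun w => ∫ t in (0 : ℝ)..2 * π, Q t * exp (w * ↑(ω - t) * I)
  have hQi (w : ℝ) :
      IntervalIntegrable (fun t => Q t * exp (w * ↑(ω - t) * I)) volume 0 (2 * π) :=
    (hQ.mul (by fun_prop)).intervalIntegrable_of_Icc (by positivity)
  have hsplit (M : ℕ) : ∫ t in (0 : ℝ)..2 * π, f t * dirichletKernel M (ω - t) =
      2 * π * f ω + (R (M + 1) - R (-M)) := by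
    have hpt : EqOn (fun t => f t * dirichletKernel M (ω - t))
        (fun t => f ω * dirichletKernel M (ω - t) + (Q t * exp (↑((M : ℝ) + 1) * ↑(ω - t) * I)
          - Q t * exp (↑(-(M : ℝ)) * ↑(ω - t) * I))) (uIcc 0 (2 * π)) := by
      intro t ht
      rw [uIcc_of_le (by positivity)] at ht
      have hD := dirichletKernel_mul_exp_sub_one M (ω - t)
      have hfQt := hfQ t ht
      push_cast at hD hfQt ⊢
      linear_combination dirichletKernel M (ω - t) * hfQt + Q t * hD
    rw [intervalIntegral.integral_congr hpt, intervalIntegral.integral_add,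
      intervalIntegral.integral_sub (hQi _) (hQi _), intervalIntegral.integral_const_mul,
      integral_dirichletKernel_sub]
    · ring
    · exact (by fun_prop : Continuous _).intervalIntegrable _ _
    · exact (hQi _).sub (hQi _)
  have h1 : Tendsto (fun M : ℕ => (M : ℝ) + 1) atTop (cocompact ℝ) :=
    (tendsto_atTop_add_const_right _ 1 tendsto_natCast_atTop_atTop).mono_right atTop_le_cocompact
  have h2 : Tendsto (fun M : ℕ => -(M : ℝ)) atTop (cocompact ℝ) :=
    (tendsto_neg_atTop_atBot.comp tendsto_natCast_atTop_atTop).mono_right atBot_le_cocompact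
  have hR := tendsto_intervalIntegral_mul_exp_sub_cocompact Q 0 (2 * π) ω
  have h := (tendsto_const_nhds (x := 2 * π * f ω)).add ((hR.comp h1).sub (hR.comp h2))
  rw [sub_zero, add_zero] at h
  exact h.congr fun M => (hsplit M).symm

theorem integral_exp_mul_dirichletKernel_sub {a : ℝ} (ha : a ≠ 0) (ω : ℝ) (M : ℕ) :
    ∫ t in (0 : ℝ)..2 * π, exp (a * t) * dirichletKernel M (ω - t) =
      (Real.exp (2 * π * a) - 1) *
        ∑ m ∈ Finset.Icc (-(M : ℤ)) M, exp (m * ω * I) / (a - m * I) := by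
  rw [integral_mul_dirichletKernel_sub ((by fun_prop : Continuous _).intervalIntegrable _ _),
    Finset.mul_sum]
  refine Finset.sum_congr rfl fun m _ => ?_
  rw [integral_exp_mul_exp_int_mul_I _ _ fun h => ha (by simpa using congrArg re h)]
  push_cast
  ring

/-- For a nonzero real `a` and `ω ∈ (0,2π)`, the symmetric partial sums
`Σ_{m=−M}^{M} e^{imω}/(a − im)` converge to `(2π/(e^{2πa} − 1))·e^{aω}`. -/
theorem stmt_14 (a : ℝ) (ha : a ≠ 0) (ω : ℝ) (hω : ω ∈ Set.Ioo (0:ℝ) (2 * Real.pi)) :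
    Filter.Tendsto
      (fun Mn : ℕ => ∑ m ∈ Finset.Icc (-(Mn : ℤ)) (Mn : ℤ),
        Complex.exp (Complex.I * (m : ℂ) * (ω : ℂ)) / ((a : ℂ) - Complex.I * (m : ℂ)))
      Filter.atTop
      (nhds (((2 * Real.pi / (Real.exp (2 * Real.pi * a) - 1)) * Real.exp (a * ω) : ℝ) : ℂ)) := by
  have hc : Real.exp (2 * π * a) - 1 ≠ 0 := by
    rw [sub_ne_zero, Ne, Real.exp_eq_one_iff]
    exact mul_ne_zero (by positivity) ha
  have hc' : (Real.exp (2 * π * a) - 1 : ℂ) ≠ 0 := by exact_mod_cast hc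
  have h := (tendsto_integral_mul_dirichletKernel_sub hω (f := fun t => exp (a * t))
    (by fun_prop) (by fun_prop)).const_mul (Real.exp (2 * π * a) - 1 : ℂ)⁻¹
  convert h using 2 with M
  · rw [integral_exp_mul_dirichletKernel_sub ha, inv_mul_cancel_left₀ hc']
    exact Finset.sum_congr rfl fun m _ => by ring_nf
  · push_cast
    field_simp
end

section
/- Let u : ℝ → ℝ be twice continuously differentiable on (0,∞) with u'(c) > 0 for all c > 0, and suppose u is scale-free: for every r > 0 there exist C(r) ∈ ℝ and D(r) > 0 such that u(r·c) = C(r) + D(r)·u(c) for all c > 0. Then u is isoelastic up to positive affine transformation: either there exist A ∈ ℝ and B > 0 with u(c) = A + B·log(c) for all c > 0, or there exist a real γ ≠ 1, A ∈ ℝ and B > 0 with u(c) = A + B·(c^{1−γ} − 1)/(1−γ) for all c > 0. -/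
/-!
Differentiating `u (r * c) = C + D * u c` in `c` gives `r * u' (r * c) = D * u' c`; comparing with
`c = 1` shows that `c ↦ c * u' c / u' 1` is a continuous positive multiplicative function on
`(0, ∞)`, hence a power `c ^ k` (conjugated by `log` and `exp` it is a continuous solution of
Cauchy's equation). So `u' c = u' 1 * c ^ (k - 1)`, and integrating gives the logarithm for
`k = 0` and the isoelastic utility with `γ = 1 - k` otherwise.
-/

open Set Real

lemma mul_deriv_comp_mul_eq_of_scale {u : ℝ → ℝ} {r C D c : ℝ} (hc : 0 < c)
    (hscale : ∀ x, 0 < x → u (r * x) = C + D * u x) :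
    r * deriv u (r * c) = D * deriv u c := by
  have hloc : (fun x => u (r * x)) =ᶠ[nhds c] fun x => C + D * u x :=
    Filter.eventually_of_mem (isOpen_Ioi.mem_nhds hc) fun x hx => hscale x hx
  calc r * deriv u (r * c) = deriv (fun x => u (r * x)) c := by
        rw [deriv_comp_mul_left, smul_eq_mul]
    _ = deriv (fun x => C + D * u x) c := hloc.deriv_eq
    _ = D * deriv u c := by rw [deriv_const_add, deriv_const_mul_field]

lemma exists_eq_rpow_of_map_mul {f : ℝ → ℝ} (hf : ContinuousOn f (Ioi 0))
    (hpos : ∀ x, 0 < x → 0 < f x) (hmul : ∀ x y, 0 < x → 0 < y → f (x * y) = f x * f y) :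
    ∃ k : ℝ, ∀ x, 0 < x → f x = x ^ k := by
  let g : ℝ →+ ℝ := AddMonoidHom.mk' (fun t => log (f (exp t))) fun s t => by
    rw [exp_add, hmul _ _ (exp_pos s) (exp_pos t),
      log_mul (hpos _ (exp_pos s)).ne' (hpos _ (exp_pos t)).ne']
  have hg : Continuous g :=
    (hf.comp_continuous continuous_exp exp_pos).log fun t => (hpos _ (exp_pos t)).ne'
  refine ⟨g 1, fun x hx => ?_⟩
  have hlin : g (log x) = log x * g 1 := by simpa using map_real_smul g hg (log x) 1
  calc f x = exp (g (log x)) := by simp [g, exp_log hx, exp_log (hpos x hx)]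
    _ = x ^ g 1 := by rw [hlin, rpow_def_of_pos hx]

lemma exists_deriv_eq_mul_rpow_of_scale {u : ℝ → ℝ} (hcont : ContinuousOn (deriv u) (Ioi 0))
    (hpos : ∀ c, 0 < c → 0 < deriv u c)
    (hscale : ∀ r, 0 < r → ∃ C D : ℝ, ∀ c, 0 < c → u (r * c) = C + D * u c) :
    ∃ k : ℝ, ∀ c, 0 < c → deriv u c = deriv u 1 * c ^ (k - 1) := by
  have h1 : 0 < deriv u 1 := hpos 1 one_pos
  have hmul : ∀ x y, 0 < x → 0 < y →
      x * y * deriv u (x * y) / deriv u 1 =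
        x * deriv u x / deriv u 1 * (y * deriv u y / deriv u 1) := by
    intro x y hx hy
    obtain ⟨C, D, hCD⟩ := hscale x hx
    have hy' := mul_deriv_comp_mul_eq_of_scale hy hCD
    have h1' := mul_deriv_comp_mul_eq_of_scale one_pos hCD
    rw [mul_one] at h1'
    field_simp
    exact mul_left_cancel₀ hx.ne' (by linear_combination deriv u 1 * hy' - deriv u y * h1')
  obtain ⟨k, hk⟩ := exists_eq_rpow_of_map_mul (f := fun c => c * deriv u c / deriv u 1)
    ((continuousOn_id.mul hcont).div_const _)
    (fun c hc => div_pos (mul_pos hc (hpos c hc)) h1) hmul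
  refine ⟨k, fun c hc => ?_⟩
  have hkc := hk c hc
  rw [rpow_sub hc, rpow_one, ← hkc]
  field_simp

lemma eq_add_mul_log_of_deriv_eq {u : ℝ → ℝ} {B : ℝ} (hu : DifferentiableOn ℝ u (Ioi 0))
    (hderiv : ∀ c, 0 < c → deriv u c = B * c⁻¹) {c : ℝ} (hc : 0 < c) :
    u c = u 1 + B * log c := by
  have hv : ∀ x : ℝ, 0 < x → HasDerivAt (fun c => u 1 + B * log c) (B * x⁻¹) x :=
    fun x hx => ((hasDerivAt_log hx.ne').const_mul B).const_add (u 1)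
  refine isOpen_Ioi.eqOn_of_deriv_eq (g := fun c => u 1 + B * log c) isPreconnected_Ioi hu
    (fun x hx => (hv x hx).differentiableAt.differentiableWithinAt) (fun x hx => ?_)
    (mem_Ioi.2 one_pos) (by simp) hc
  rw [hderiv x hx, (hv x hx).deriv]

lemma eq_add_mul_rpow_of_deriv_eq {u : ℝ → ℝ} {B k : ℝ} (hk : k ≠ 0)
    (hu : DifferentiableOn ℝ u (Ioi 0))
    (hderiv : ∀ c, 0 < c → deriv u c = B * c ^ (k - 1)) {c : ℝ} (hc : 0 < c) :
    u c = u 1 + B * ((c ^ k - 1) / k) := by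
  have hv : ∀ x : ℝ, 0 < x →
      HasDerivAt (fun c => u 1 + B * ((c ^ k - 1) / k)) (B * x ^ (k - 1)) x := fun x hx =>
    ((((hasDerivAt_rpow_const (p := k) (Or.inl hx.ne')).sub_const 1).div_const k).const_mul
      B).const_add (u 1) |>.congr_deriv (by field_simp)
  refine isOpen_Ioi.eqOn_of_deriv_eq (g := fun c => u 1 + B * ((c ^ k - 1) / k))
    isPreconnected_Ioi hu
    (fun x hx => (hv x hx).differentiableAt.differentiableWithinAt) (fun x hx => ?_)
    (mem_Ioi.2 one_pos) (by simp) hc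
  rw [hderiv x hx, (hv x hx).deriv]

/-- Every scale-free, twice continuously differentiable utility function on `(0,∞)` with
strictly positive marginal utility is, up to a positive affine transformation, either the
logarithmic utility or an isoelastic utility `(c^{1−γ}−1)/(1−γ)` for some `γ ≠ 1`. -/
theorem stmt_15 (u : ℝ → ℝ)
    (hsmooth : ContDiffOn ℝ 2 u (Set.Ioi (0:ℝ)))
    (hmono : ∀ c : ℝ, 0 < c → 0 < deriv u c)
    (hscale : ∀ r : ℝ, 0 < r → ∃ C : ℝ, ∃ D : ℝ, 0 < D ∧
      ∀ c : ℝ, 0 < c → u (r * c) = C + D * u c) :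
    (∃ A : ℝ, ∃ B : ℝ, 0 < B ∧ ∀ c : ℝ, 0 < c → u c = A + B * Real.log c) ∨
    (∃ γ : ℝ, γ ≠ 1 ∧ ∃ A : ℝ, ∃ B : ℝ, 0 < B ∧
      ∀ c : ℝ, 0 < c → u c = A + B * ((c ^ (1 - γ) - 1) / (1 - γ))) := by
  have hdiff : DifferentiableOn ℝ u (Ioi 0) := hsmooth.differentiableOn (by norm_num)
  have hcont : ContinuousOn (deriv u) (Ioi 0) :=
    hsmooth.continuousOn_deriv_of_isOpen isOpen_Ioi (by norm_num)
  obtain ⟨k, hk⟩ := exists_deriv_eq_mul_rpow_of_scale hcont hmono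
    fun r hr => (hscale r hr).imp fun _ ⟨D, _, hD⟩ => ⟨D, hD⟩
  rcases eq_or_ne k 0 with rfl | hk0
  · refine .inl ⟨u 1, deriv u 1, hmono 1 one_pos, fun c hc => ?_⟩
    refine eq_add_mul_log_of_deriv_eq hdiff (fun x hx => ?_) hc
    rw [hk x hx, zero_sub, rpow_neg_one]
  · refine .inr ⟨1 - k, by simpa using hk0, u 1, deriv u 1, hmono 1 one_pos, fun c hc => ?_⟩
    rw [sub_sub_cancel]
    exact eq_add_mul_rpow_of_deriv_eq hk0 hdiff hk hc
end

section
/- Let γ > 0 with γ ≠ 1, let P ∈ (0,1) and c > 0, and let u_γ(x) = (x^{1−γ} − 1)/(1−γ). Define p'_γ = P^{1/γ} / (P^{1/γ} + (1−P)^{1/γ}). Then the function p' ↦ P·u_γ(p'·c) + (1−P)·u_γ((1−p')·c) on (0,1) attains its unique maximum at p' = p'_γ: for every p' ∈ (0,1) with p' ≠ p'_γ the value at p' is strictly smaller than at p'_γ; and the maximum value equals (c^{1−γ}·(P^{1/γ} + (1−P)^{1/γ})^{γ} − 1)/(1−γ). In particular the maximized function is again a positive affine transformation of u_γ, so isoelastic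 utilities are invariant under the Bellman (instrumentalisation) operator of the double-or-nothing gamble. -/
/-!
The objective `p ↦ P·u(p c) + (1−P)·u((1−p) c)` is a sum of strictly concave functions, so it
lies strictly below its tangent line at any point; at `p'_γ` the first-order condition
`P·(p'_γ c)^{-γ} = (1−P)·((1−p'_γ) c)^{-γ}` makes that tangent line horizontal, whence `p'_γ` is
the unique maximiser. Both marginal utilities there equal `S^γ c^{-γ}` with
`S = P^{1/γ} + (1−P)^{1/γ}`, and since `u_γ(x) = (x·x^{-γ} − 1)/(1−γ)` this also gives the value.
-/

open Real Set

noncomputable section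

def isoelastic (γ x : ℝ) : ℝ := (x ^ (1 - γ) - 1) / (1 - γ)

def gambleValue (u : ℝ → ℝ) (P c p : ℝ) : ℝ := P * u (p * c) + (1 - P) * u ((1 - p) * c)

end

lemma one_add_mul_sub_one_lt_rpow_of_neg {t α : ℝ} (ht : 0 < t) (ht1 : t ≠ 1) (hα : α < 0) :
    1 + α * (t - 1) < t ^ α := by
  have hlog : log t < t - 1 := log_lt_sub_one_of_pos ht ht1
  have hlog0 : α * log t ≠ 0 := mul_ne_zero hα.ne (log_ne_zero_of_pos_of_ne_one ht ht1)
  calc 1 + α * (t - 1) < 1 + α * log t := by nlinarith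
    _ < exp (α * log t) := by linarith [add_one_lt_exp hlog0]
    _ = t ^ α := by rw [rpow_def_of_pos ht, mul_comm]

lemma rpow_sub_one_div_lt_sub_one {t α : ℝ} (ht : 0 < t) (ht1 : t ≠ 1) (hα0 : α ≠ 0)
    (hα1 : α < 1) : (t ^ α - 1) / α < t - 1 := by
  rcases hα0.lt_or_gt with hα | hα
  · rw [div_lt_iff_of_neg hα]
    linarith [one_add_mul_sub_one_lt_rpow_of_neg ht ht1 hα]
  · rw [div_lt_iff₀ hα]
    have h := rpow_one_add_lt_one_add_mul_self (s := t - 1) (by linarith) (sub_ne_zero.2 ht1)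
      hα hα1
    rw [add_sub_cancel] at h
    linarith

lemma isoelastic_lt_tangent {γ : ℝ} (hγ : 0 < γ) (hγ1 : γ ≠ 1) {x y : ℝ} (hx : 0 < x)
    (hy : 0 < y) (hxy : x ≠ y) :
    isoelastic γ x < isoelastic γ y + y ^ (-γ) * (x - y) := by
  have hα0 : 1 - γ ≠ 0 := sub_ne_zero.2 hγ1.symm
  have hyα : 0 < y ^ (1 - γ) := rpow_pos_of_pos hy _
  have key := rpow_sub_one_div_lt_sub_one (div_pos hx hy)
    (fun h ↦ hxy ((div_eq_one_iff_eq hy.ne').1 h)) hα0 (by linarith)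
  rw [div_rpow hx.le hy.le] at key
  have hyγ : y ^ (-γ) = y ^ (1 - γ) / y := by
    rw [← rpow_sub_one hy.ne']; ring_nf
  calc isoelastic γ x
        = isoelastic γ y + y ^ (1 - γ) * ((x ^ (1 - γ) / y ^ (1 - γ) - 1) / (1 - γ)) := by
        unfold isoelastic; field_simp; ring
    _ < isoelastic γ y + y ^ (1 - γ) * (x / y - 1) := by gcongr
    _ = isoelastic γ y + y ^ (-γ) * (x - y) := by
        rw [hyγ]; field_simp

lemma gambleValue_lt_of_tangent {u u' : ℝ → ℝ}
    (htan : ∀ x y, 0 < x → 0 < y → x ≠ y → u x < u y + u' y * (x - y))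
    {P c q : ℝ} (hP0 : 0 < P) (hP1 : P < 1) (hc : 0 < c) (hq : q ∈ Ioo 0 1)
    (hfoc : P * u' (q * c) = (1 - P) * u' ((1 - q) * c)) {p : ℝ} (hp : p ∈ Ioo 0 1)
    (hpq : p ≠ q) : gambleValue u P c p < gambleValue u P c q := by
  obtain ⟨hp0, hp1⟩ := hp
  obtain ⟨hq0, hq1⟩ := hq
  have h1 := htan (p * c) (q * c) (by positivity) (by positivity)
    (fun h ↦ hpq (mul_right_cancel₀ hc.ne' h))
  have h2 := htan ((1 - p) * c) ((1 - q) * c) (mul_pos (by linarith) hc)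
    (mul_pos (by linarith) hc) (fun h ↦ hpq (by linarith [mul_right_cancel₀ hc.ne' h]))
  have h1' := mul_lt_mul_of_pos_left h1 hP0
  have h2' := mul_lt_mul_of_pos_left h2 (sub_pos.2 hP1)
  unfold gambleValue
  linear_combination h1' + h2' + (p - q) * c * hfoc

lemma gambleValue_isoelastic_of_foc {γ P c q K : ℝ} (hc : 0 < c) (hq : q ∈ Ioo 0 1)
    (hK : P * (q * c) ^ (-γ) = K) (hK' : (1 - P) * ((1 - q) * c) ^ (-γ) = K) :
    gambleValue (isoelastic γ) P c q = (c * K - 1) / (1 - γ) := by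
  have hsplit : ∀ x : ℝ, 0 < x → x ^ (1 - γ) = x * x ^ (-γ) := fun x hx ↦ by
    rw [sub_eq_add_neg, rpow_add hx, rpow_one]
  have hmean : P * (q * c * (q * c) ^ (-γ)) + (1 - P) * ((1 - q) * c * ((1 - q) * c) ^ (-γ))
      = c * K := by
    linear_combination q * c * hK + (1 - q) * c * hK'
  unfold gambleValue isoelastic
  rw [hsplit _ (mul_pos hq.1 hc), hsplit _ (mul_pos (sub_pos.2 hq.2) hc), ← hmean]
  ring

lemma mul_div_rpow_neg {w S γ : ℝ} (hw : 0 < w) (hS : 0 < S) (hγ : γ ≠ 0) :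
    w * (w ^ (1 / γ) / S) ^ (-γ) = S ^ γ := by
  rw [div_rpow (rpow_nonneg hw.le _) hS.le, ← rpow_mul hw.le, rpow_neg hS.le,
    show 1 / γ * -γ = -1 by field_simp, rpow_neg_one]
  field_simp

/-- Isoelastic utilities are invariant under the Bellman (instrumentalisation) operator of
the double-or-nothing gamble: `p' ↦ P·u_γ(p'·c) + (1−P)·u_γ((1−p')·c)` attains its unique
maximum on `(0,1)` at `p'_γ = P^{1/γ}/(P^{1/γ}+(1−P)^{1/γ})`, with maximal value
`(c^{1−γ}·(P^{1/γ}+(1−P)^{1/γ})^γ − 1)/(1−γ)`. -/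
theorem stmt_16 (γ : ℝ) (hγ : 0 < γ) (hγ1 : γ ≠ 1)
    (P : ℝ) (hP : P ∈ Set.Ioo (0:ℝ) 1) (c : ℝ) (hc : 0 < c)
    (u : ℝ → ℝ) (hu : ∀ x, u x = (x ^ (1 - γ) - 1) / (1 - γ))
    (pγ : ℝ) (hpγ : pγ = P ^ (1/γ) / (P ^ (1/γ) + (1 - P) ^ (1/γ))) :
    pγ ∈ Set.Ioo (0:ℝ) 1 ∧
    (∀ p' ∈ Set.Ioo (0:ℝ) 1, p' ≠ pγ →
      P * u (p' * c) + (1 - P) * u ((1 - p') * c)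
        < P * u (pγ * c) + (1 - P) * u ((1 - pγ) * c)) ∧
    P * u (pγ * c) + (1 - P) * u ((1 - pγ) * c)
      = (c ^ (1 - γ) * (P ^ (1/γ) + (1 - P) ^ (1/γ)) ^ γ - 1) / (1 - γ) := by
  obtain rfl : u = isoelastic γ := funext hu
  obtain ⟨hP0, hP1⟩ := hP
  set S := P ^ (1 / γ) + (1 - P) ^ (1 / γ)
  have hA : 0 < P ^ (1 / γ) := rpow_pos_of_pos hP0 _
  have hB : 0 < (1 - P) ^ (1 / γ) := rpow_pos_of_pos (sub_pos.2 hP1) _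
  have hS : 0 < S := add_pos hA hB
  have hqγ : 1 - pγ = (1 - P) ^ (1 / γ) / S := by
    rw [hpγ]; field_simp; ring
  have hpγ_mem : pγ ∈ Ioo 0 1 := ⟨hpγ ▸ div_pos hA hS, by linarith [div_pos hB hS]⟩
  have hmarg : ∀ w x, 0 < w → x = w ^ (1 / γ) / S → w * (x * c) ^ (-γ) = S ^ γ * c ^ (-γ) :=
    fun w x hw hx ↦ by
      rw [mul_rpow (hx ▸ div_pos (rpow_pos_of_pos hw _) hS).le hc.le, ← mul_assoc, hx,
        mul_div_rpow_neg hw hS hγ.ne']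
  have hfoc := hmarg P pγ hP0 hpγ
  have hfoc' := hmarg (1 - P) (1 - pγ) (sub_pos.2 hP1) hqγ
  refine ⟨hpγ_mem, fun p hp hne ↦ gambleValue_lt_of_tangent
    (fun _ _ ↦ isoelastic_lt_tangent hγ hγ1) hP0 hP1 hc hpγ_mem
    (hfoc.trans hfoc'.symm) hp hne, ?_⟩
  have hcγ : c * c ^ (-γ) = c ^ (1 - γ) := by rw [sub_eq_add_neg, rpow_add hc, rpow_one]
  rw [← gambleValue, gambleValue_isoelastic_of_foc hc hpγ_mem hfoc hfoc', ← hcγ]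
  ring
end

section
/- Let u, v, u', v' be strictly positive reals and define, for z > 0, h(z) = (1/2)·| (z·u − v/z)/(z·u + v/z) − (z·u' − v'/z)/(z·u' + v'/z) |. Then for every z > 0 one has h(z) ≤ |√(u·v') − √(u'·v)| / (√(u·v') + √(u'·v)), and this bound is attained for some z > 0; hence sup_{z>0} h(z) = |√(u·v') − √(u'·v)| / (√(u·v') + √(u'·v)). -/
/-- The maximal half-difference of two shifted hyperbolic tangents: for positive reals
`u, v, u', v'` and `h(z) = (1/2)·|(zu − v/z)/(zu + v/z) − (zu' − v'/z)/(zu' + v'/z)|`,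
the bound `h(z) ≤ |√(uv') − √(u'v)|/(√(uv') + √(u'v))` holds for all `z > 0`, is attained,
and hence is the supremum of `h` over `z > 0`. -/
theorem stmt_17 (u v u' v' : ℝ) (hu : 0 < u) (hv : 0 < v) (hu' : 0 < u') (hv' : 0 < v')
    (h : ℝ → ℝ)
    (hh : ∀ z, h z = (1/2) * |(z * u - v / z) / (z * u + v / z)
      - (z * u' - v' / z) / (z * u' + v' / z)|) :
    (∀ z : ℝ, 0 < z →
      h z ≤ |Real.sqrt (u * v') - Real.sqrt (u' * v)|
        / (Real.sqrt (u * v') + Real.sqrt (u' * v))) ∧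
    (∃ z : ℝ, 0 < z ∧
      h z = |Real.sqrt (u * v') - Real.sqrt (u' * v)|
        / (Real.sqrt (u * v') + Real.sqrt (u' * v))) ∧
    IsGreatest {y : ℝ | ∃ z : ℝ, 0 < z ∧ y = h z}
      (|Real.sqrt (u * v') - Real.sqrt (u' * v)|
        / (Real.sqrt (u * v') + Real.sqrt (u' * v))) := by
  set A := Real.sqrt (u * v') with hAdef
  set B := Real.sqrt (u' * v) with hBdef
  set C := Real.sqrt (u * u') with hCdef
  set D := Real.sqrt (v * v') with hDdef
  have hA : 0 < A := Real.sqrt_pos.2 (by positivity)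
  have hB : 0 < B := Real.sqrt_pos.2 (by positivity)
  have hC : 0 < C := Real.sqrt_pos.2 (by positivity)
  have hD : 0 < D := Real.sqrt_pos.2 (by positivity)
  have hA2 : A ^ 2 = u * v' := Real.sq_sqrt (by positivity)
  have hB2 : B ^ 2 = u' * v := Real.sq_sqrt (by positivity)
  have hC2 : C ^ 2 = u * u' := Real.sq_sqrt (by positivity)
  have hD2 : D ^ 2 = v * v' := Real.sq_sqrt (by positivity)
  have hABCD : A * B = C * D := by
    rw [hAdef, hBdef, hCdef, hDdef, ← Real.sqrt_mul (by positivity),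
      ← Real.sqrt_mul (by positivity)]
    congr 1
    ring
  have habs : |u * v' - u' * v| = |A - B| * (A + B) := by
    have h1 : u * v' - u' * v = (A - B) * (A + B) := by
      rw [← hA2, ← hB2]; ring
    rw [h1, abs_mul, abs_of_pos (by positivity : (0:ℝ) < A + B)]
  have hform : ∀ z : ℝ, 0 < z →
      h z = z ^ 2 * (|A - B| * (A + B)) / ((z ^ 2 * u + v) * (z ^ 2 * u' + v')) := by
    intro z hz
    have hz' : z ≠ 0 := hz.ne'
    have hd1 : (0:ℝ) < z * u + v / z := by positivity
    have hd2 : (0:ℝ) < z * u' + v' / z := by positivity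
    have key : (z * u - v / z) / (z * u + v / z) - (z * u' - v' / z) / (z * u' + v' / z)
        = 2 * (z ^ 2 * (u * v' - u' * v)) / ((z ^ 2 * u + v) * (z ^ 2 * u' + v')) := by
      rw [div_sub_div _ _ hd1.ne' hd2.ne', div_eq_div_iff (by positivity) (by positivity)]
      field_simp
      ring
    rw [hh, key, abs_div, abs_mul, abs_mul, abs_two,
      abs_of_pos (show (0:ℝ) < z ^ 2 by positivity),
      abs_of_pos (show (0:ℝ) < (z ^ 2 * u + v) * (z ^ 2 * u' + v') by positivity),
      habs]
    ring
  have hbound : ∀ z : ℝ, 0 < z →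
      h z ≤ |A - B| / (A + B) := by
    intro z hz
    rw [hform z hz, div_le_div_iff₀ (by positivity) (by positivity)]
    have e2 : (z ^ 2 * u + v) * (z ^ 2 * u' + v') - z ^ 2 * (A + B) ^ 2
        = (z ^ 2 * C - D) ^ 2 := by
      linear_combination (-(z ^ 2)) * hA2 + (-(z ^ 2)) * hB2 + (-2 * z ^ 2) * hABCD
        + (-(z ^ 4)) * hC2 + (-1) * hD2
    have key2 : z ^ 2 * (A + B) ^ 2 ≤ (z ^ 2 * u + v) * (z ^ 2 * u' + v') := by
      nlinarith [e2, sq_nonneg (z ^ 2 * C - D)]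
    calc z ^ 2 * (|A - B| * (A + B)) * (A + B) = |A - B| * (z ^ 2 * (A + B) ^ 2) := by ring
      _ ≤ |A - B| * ((z ^ 2 * u + v) * (z ^ 2 * u' + v')) :=
          mul_le_mul_of_nonneg_left key2 (abs_nonneg _)
  have hz0 : (0:ℝ) < Real.sqrt (D / C) := Real.sqrt_pos.2 (by positivity)
  set z0 := Real.sqrt (D / C) with hz0def
  have hz0sq : z0 ^ 2 = D / C := Real.sq_sqrt (by positivity)
  have hzc : z0 ^ 2 * C = D := by rw [hz0sq]; field_simp
  have heq : h z0 = |A - B| / (A + B) := by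
    rw [hform z0 hz0]
    have hden : (z0 ^ 2 * u + v) * (z0 ^ 2 * u' + v') = z0 ^ 2 * (A + B) ^ 2 := by
      linear_combination (-(z0 ^ 2)) * hA2 + (-(z0 ^ 2)) * hB2 + (-2 * z0 ^ 2) * hABCD
        + (z0 ^ 2 * C - D) * hzc + (-(z0 ^ 4)) * hC2 + (-1) * hD2
    rw [hden, div_eq_div_iff (by positivity) (by positivity)]
    ring
  exact ⟨hbound, ⟨z0, hz0, heq⟩, ⟨⟨z0, hz0, heq.symm⟩, by
    rintro y ⟨z, hz, rfl⟩; exact hbound z hz⟩⟩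
end

section
/- Let ι be a finite nonempty type and p, q : ι → ℝ with p_k > 0, q_k > 0 for all k and Σ_k p_k = Σ_k q_k = 1. Let γ > 0 with γ ≠ 1. Define Λ̄ = max over pairs (k,ℓ) of |(1/2)·log((p_k·q_ℓ)/(p_ℓ·q_k))|, and define Φ : ℝ → ℝ by Φ(ϑ) = −(γ/(1−γ))·log( [Σ_k p_k^{1/γ}·(e^{ϑ/(2γ)}·p_k^{1/γ} + e^{−ϑ/(2γ)}·q_k^{1/γ})^{γ−1}] / [Σ_k q_k^{1/γ}·(e^{ϑ/(2γ)}·p_k^{1/γ} + e^{−ϑ/(2γ)}·q_k^{1/γ})^{γ−1}] ). Then Φ is Lipschitz with constant (1 − e^{−Λ̄/γ})/(1 + e^{−Λ̄/γ}) < 1, and Φ has exactly one fixed point ϑ*_γ ∈ ℝ. -/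
/-!
Write `S_k(ϑ) = e^{ϑ/2γ} p_k^{1/γ} + e^{-ϑ/2γ} q_k^{1/γ} = u_k + v_k` and
`F_c = ∑_k c_k^{1/γ} S_k^{γ-1}`. Then `Φ = γ/(γ-1) · (log F_p - log F_q)`, so `Φ'` is `γ` times the
difference of two weighted averages of the same numbers `S_k'/S_k = (u_k - v_k)/(2γ (u_k + v_k))`.
Since `u_k v_l / (u_l v_k) = (p_k q_l / (p_l q_k))^{1/γ} ≤ e^{2Λ̄/γ}`, any two of these numbers differ
by at most `K/γ` with `K = (1 - e^{-Λ̄/γ})/(1 + e^{-Λ̄/γ})`. Hence `|Φ'| ≤ K < 1`: by the mean value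
theorem `Φ` is a contraction, and Banach's fixed point theorem gives the unique fixed point.
-/

open Real Finset

theorem sub_div_add_sub_sub_div_add_le {ρ u v u' v' : ℝ} (hρ0 : 0 ≤ ρ) (hρ1 : ρ ≤ 1)
    (hu : 0 < u) (hv : 0 < v) (hu' : 0 < u') (hv' : 0 < v')
    (h : ρ ^ 2 * (u * v') ≤ u' * v) :
    (u - v) / (u + v) - (u' - v') / (u' + v') ≤ 2 * ((1 - ρ) / (1 + ρ)) := by
  set x := √(u * v')
  set y := √(u' * v)
  have hx : x ^ 2 = u * v' := sq_sqrt (by positivity)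
  have hy : y ^ 2 = u' * v := sq_sqrt (by positivity)
  have hx0 : 0 ≤ x := sqrt_nonneg _
  have hy0 : 0 ≤ y := sqrt_nonneg _
  have hρxy : ρ * x ≤ y := by
    rw [← pow_le_pow_iff_left₀ (by positivity) hy0 two_ne_zero]
    rwa [mul_pow, hx, hy]
  have hamgm : 2 * (x * y) ≤ u * u' + v * v' := by
    rw [← pow_le_pow_iff_left₀ (by positivity) (by positivity) two_ne_zero]
    nlinarith [sq_nonneg (u * u' - v * v')]
  -- `(u + v)(u' + v') ≥ (x + y)²`, and `(x² - y²)(1 + ρ) ≤ (1 - ρ)(x + y)²` iff `ρ x ≤ y`.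
  rw [div_sub_div _ _ (by positivity) (by positivity), div_le_iff₀ (by positivity),
    mul_div_assoc', div_mul_eq_mul_div, le_div_iff₀ (by positivity)]
  nlinarith [mul_nonneg (sub_nonneg.2 hρ1) (sub_nonneg.2 hamgm),
    mul_nonneg (add_nonneg hx0 hy0) (sub_nonneg.2 hρxy)]

theorem exp_neg_div_sq_mul_rpow_le {x y Λ γ : ℝ} (hx : 0 < x) (hy : 0 < y) (hγ : 0 < γ)
    (h : (1/2) * log (x / y) ≤ Λ) :
    exp (-Λ / γ) ^ 2 * x ^ (1/γ) ≤ y ^ (1/γ) := by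
  rw [rpow_def_of_pos hx, rpow_def_of_pos hy, sq, ← exp_add, ← exp_add, exp_le_exp]
  rw [log_div hx.ne' hy.ne'] at h
  have key : (log x - log y - 2 * Λ) / γ ≤ 0 :=
    div_nonpos_of_nonpos_of_nonneg (by linarith) hγ.le
  linarith [show (log x - log y - 2 * Λ) / γ
    = -Λ / γ + -Λ / γ + log x * (1/γ) - log y * (1/γ) by ring]

section FiniteSums

variable {ι : Type*} [Fintype ι]

theorem sum_mul_div_sum_sub_le {w w' f : ι → ℝ} {C : ℝ}
    (hw : ∀ k, 0 ≤ w k) (hw' : ∀ k, 0 ≤ w' k) (hW : 0 < ∑ k, w k) (hW' : 0 < ∑ k, w' k)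
    (hf : ∀ k l, f k - f l ≤ C) :
    (∑ k, w k * f k) / (∑ k, w k) - (∑ k, w' k * f k) / (∑ k, w' k) ≤ C := by
  rw [div_sub_div _ _ hW.ne' hW'.ne', div_le_iff₀ (mul_pos hW hW')]
  calc (∑ k, w k * f k) * (∑ l, w' l) - (∑ k, w k) * (∑ l, w' l * f l)
      = ∑ k, ∑ l, w k * w' l * (f k - f l) := by
        simp only [Fintype.sum_mul_sum, ← Finset.sum_sub_distrib]
        exact Fintype.sum_congr _ _ fun k => Fintype.sum_congr _ _ fun l => by ring
    _ ≤ ∑ k, ∑ l, w k * w' l * C := by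
        gcongr with k _ l _
        · exact mul_nonneg (hw k) (hw' l)
        · exact hf k l
    _ = C * ((∑ k, w k) * ∑ l, w' l) := by
        rw [Fintype.sum_mul_sum, Finset.mul_sum]
        refine Fintype.sum_congr _ _ fun k => ?_
        rw [Finset.mul_sum]
        exact Fintype.sum_congr _ _ fun l => by ring

theorem abs_sum_mul_div_sum_sub_le {w w' f : ι → ℝ} {C : ℝ}
    (hw : ∀ k, 0 ≤ w k) (hw' : ∀ k, 0 ≤ w' k) (hW : 0 < ∑ k, w k) (hW' : 0 < ∑ k, w' k)
    (hf : ∀ k l, f k - f l ≤ C) :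
    |(∑ k, w k * f k) / (∑ k, w k) - (∑ k, w' k * f k) / (∑ k, w' k)| ≤ C :=
  abs_sub_le_iff.2 ⟨sum_mul_div_sum_sub_le hw hw' hW hW' hf,
    sum_mul_div_sum_sub_le hw' hw hW' hW hf⟩

theorem hasDerivAt_log_sum_mul_rpow {c : ι → ℝ} {f : ι → ℝ → ℝ} {f' : ι → ℝ} {s t : ℝ}
    (hf : ∀ k, HasDerivAt (f k) (f' k) t) (hf0 : ∀ k, 0 < f k t)
    (hsum : ∑ k, c k * f k t ^ s ≠ 0) :
    HasDerivAt (fun t => log (∑ k, c k * f k t ^ s))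
      (s * ((∑ k, c k * f k t ^ s * (f' k / f k t)) / ∑ k, c k * f k t ^ s)) t := by
  have hsum' : HasDerivAt (fun t => ∑ k, c k * f k t ^ s)
      (∑ k, c k * (f' k * s * f k t ^ (s - 1))) t :=
    HasDerivAt.fun_sum fun k _ => ((hf k).rpow_const (Or.inl (hf0 k).ne')).const_mul (c k)
  convert hsum'.log hsum using 1
  rw [mul_div_assoc', Finset.mul_sum]
  congr 1
  refine Fintype.sum_congr _ _ fun k => ?_
  rw [rpow_sub_one (hf0 k).ne']
  field_simp

end FiniteSums

section IsoelasticGame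

variable {ι : Type*} (p q : ι → ℝ) (γ : ℝ)

noncomputable def isoelasticMix (ϑ : ℝ) (k : ι) : ℝ :=
  exp (ϑ / (2 * γ)) * p k ^ (1/γ) + exp (-ϑ / (2 * γ)) * q k ^ (1/γ)

noncomputable def isoelasticMixDeriv (ϑ : ℝ) (k : ι) : ℝ :=
  (exp (ϑ / (2 * γ)) * p k ^ (1/γ) - exp (-ϑ / (2 * γ)) * q k ^ (1/γ)) / (2 * γ)

noncomputable def isoelasticWeight (c : ι → ℝ) (ϑ : ℝ) (k : ι) : ℝ :=
  c k ^ (1/γ) * isoelasticMix p q γ ϑ k ^ (γ - 1)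

noncomputable def equilibriumMap [Fintype ι] (ϑ : ℝ) : ℝ :=
  -(γ / (1 - γ)) * log ((∑ k, isoelasticWeight p q γ p ϑ k) / ∑ k, isoelasticWeight p q γ q ϑ k)

noncomputable def isoelasticMeanLogDeriv [Fintype ι] (c : ι → ℝ) (ϑ : ℝ) : ℝ :=
  (∑ k, isoelasticWeight p q γ c ϑ k *
      (isoelasticMixDeriv p q γ ϑ k / isoelasticMix p q γ ϑ k)) /
    ∑ k, isoelasticWeight p q γ c ϑ k

variable {p q γ}

theorem exp_neg_div_le_one_of_half_log_ratio_le (hp : ∀ k, 0 < p k) (hq : ∀ k, 0 < q k)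
    (hγ : 0 < γ) {Λ : ℝ} (hΛ : ∀ k l, (1/2) * log (p k * q l / (p l * q k)) ≤ Λ) (k : ι) :
    exp (-Λ / γ) ≤ 1 := by
  have hΛ0 := hΛ k k
  rw [div_self (mul_pos (hp k) (hq k)).ne', log_one, mul_zero] at hΛ0
  exact exp_le_one_iff.2 (div_nonpos_of_nonpos_of_nonneg (neg_nonpos.2 hΛ0) hγ.le)

theorem isoelasticMix_pos (hp : ∀ k, 0 < p k) (hq : ∀ k, 0 < q k) (ϑ : ℝ) (k : ι) :
    0 < isoelasticMix p q γ ϑ k := by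
  have := hp k; have := hq k
  unfold isoelasticMix; positivity

theorem isoelasticWeight_pos (hp : ∀ k, 0 < p k) (hq : ∀ k, 0 < q k) {c : ι → ℝ}
    (hc : ∀ k, 0 < c k) (ϑ : ℝ) (k : ι) : 0 < isoelasticWeight p q γ c ϑ k :=
  mul_pos (rpow_pos_of_pos (hc k) _) (rpow_pos_of_pos (isoelasticMix_pos hp hq ϑ k) _)

theorem hasDerivAt_isoelasticMix (ϑ : ℝ) (k : ι) :
    HasDerivAt (isoelasticMix p q γ · k) (isoelasticMixDeriv p q γ ϑ k) ϑ := by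
  have hplus : HasDerivAt (fun t => t / (2 * γ)) (1 / (2 * γ)) ϑ :=
    (hasDerivAt_id ϑ).div_const _
  have hminus : HasDerivAt (fun t => -t / (2 * γ)) (-1 / (2 * γ)) ϑ :=
    (hasDerivAt_id ϑ).neg.div_const _
  refine ((hplus.exp.mul_const (p k ^ (1/γ))).add
    (hminus.exp.mul_const (q k ^ (1/γ)))).congr_deriv ?_
  simp only [isoelasticMixDeriv]; ring

theorem isoelasticMixDeriv_div_sub_le (hp : ∀ k, 0 < p k) (hq : ∀ k, 0 < q k) (hγ : 0 < γ)
    {Λ : ℝ} (hΛ : ∀ k l, (1/2) * log (p k * q l / (p l * q k)) ≤ Λ) (ϑ : ℝ) (k l : ι) :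
    isoelasticMixDeriv p q γ ϑ k / isoelasticMix p q γ ϑ k
      - isoelasticMixDeriv p q γ ϑ l / isoelasticMix p q γ ϑ l
      ≤ (1 - exp (-Λ / γ)) / (1 + exp (-Λ / γ)) / γ := by
  set E := exp (ϑ / (2 * γ))
  set E' := exp (-ϑ / (2 * γ))
  have hratio : ∀ j, isoelasticMixDeriv p q γ ϑ j / isoelasticMix p q γ ϑ j
      = (E * p j ^ (1/γ) - E' * q j ^ (1/γ)) / (E * p j ^ (1/γ) + E' * q j ^ (1/γ)) / (2 * γ) :=
    fun j => by simp only [isoelasticMix, isoelasticMixDeriv]; ring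
  have hpos : ∀ j, 0 < E * p j ^ (1/γ) ∧ 0 < E' * q j ^ (1/γ) := fun j =>
    ⟨mul_pos (exp_pos _) (rpow_pos_of_pos (hp j) _),
      mul_pos (exp_pos _) (rpow_pos_of_pos (hq j) _)⟩
  have hρ1 := exp_neg_div_le_one_of_half_log_ratio_le hp hq hγ hΛ k
  have hcross : exp (-Λ / γ) ^ 2 * ((E * p k ^ (1/γ)) * (E' * q l ^ (1/γ)))
      ≤ (E * p l ^ (1/γ)) * (E' * q k ^ (1/γ)) := by
    have h := exp_neg_div_sq_mul_rpow_le (mul_pos (hp k) (hq l)) (mul_pos (hp l) (hq k)) hγ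
      (hΛ k l)
    rw [mul_rpow (hp k).le (hq l).le, mul_rpow (hp l).le (hq k).le] at h
    calc _ = E * E' * (exp (-Λ / γ) ^ 2 * (p k ^ (1/γ) * q l ^ (1/γ))) := by ring
      _ ≤ E * E' * (p l ^ (1/γ) * q k ^ (1/γ)) := by gcongr
      _ = _ := by ring
  rw [hratio k, hratio l, ← sub_div, div_le_div_iff₀ (by positivity) hγ]
  nlinarith [sub_div_add_sub_sub_div_add_le (exp_pos _).le hρ1 (hpos k).1 (hpos k).2
    (hpos l).1 (hpos l).2 hcross]

variable [Fintype ι] [Nonempty ι]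

theorem sum_isoelasticWeight_pos (hp : ∀ k, 0 < p k) (hq : ∀ k, 0 < q k) {c : ι → ℝ}
    (hc : ∀ k, 0 < c k) (ϑ : ℝ) : 0 < ∑ k, isoelasticWeight p q γ c ϑ k :=
  sum_pos (fun k _ => isoelasticWeight_pos hp hq hc ϑ k) univ_nonempty

theorem hasDerivAt_equilibriumMap (hp : ∀ k, 0 < p k) (hq : ∀ k, 0 < q k) (hγ1 : γ ≠ 1)
    (ϑ : ℝ) :
    HasDerivAt (equilibriumMap p q γ)
      (γ * (isoelasticMeanLogDeriv p q γ p ϑ - isoelasticMeanLogDeriv p q γ q ϑ)) ϑ := by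
  have hsum := fun (c : ι → ℝ) (hc : ∀ k, 0 < c k) t =>
    sum_isoelasticWeight_pos (γ := γ) hp hq hc t
  have hlog : equilibriumMap p q γ = fun t => -(γ / (1 - γ)) *
      (log (∑ k, isoelasticWeight p q γ p t k) - log (∑ k, isoelasticWeight p q γ q t k)) :=
    funext fun t => by rw [equilibriumMap, log_div (hsum p hp t).ne' (hsum q hq t).ne']
  have hderiv := fun (c : ι → ℝ) (hc : ∀ k, 0 < c k) =>
    hasDerivAt_log_sum_mul_rpow (c := fun k => c k ^ (1/γ)) (s := γ - 1)
      (hasDerivAt_isoelasticMix ϑ) (isoelasticMix_pos hp hq ϑ) (hsum c hc ϑ).ne'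
  rw [hlog]
  refine (((hderiv p hp).sub (hderiv q hq)).const_mul (-(γ / (1 - γ)))).congr_deriv ?_
  rw [← mul_sub, ← mul_assoc]
  congr 1
  field_simp [sub_ne_zero.2 hγ1.symm]
  ring

theorem lipschitzWith_equilibriumMap (hp : ∀ k, 0 < p k) (hq : ∀ k, 0 < q k) (hγ : 0 < γ)
    (hγ1 : γ ≠ 1) {Λ : ℝ} (hΛ : ∀ k l, (1/2) * log (p k * q l / (p l * q k)) ≤ Λ) :
    LipschitzWith ((1 - exp (-Λ / γ)) / (1 + exp (-Λ / γ))).toNNReal (equilibriumMap p q γ) := by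
  refine lipschitzOnWith_univ.1 <| convex_univ.lipschitzOnWith_of_nnnorm_hasDerivWithin_le
    (fun ϑ _ => (hasDerivAt_equilibriumMap hp hq hγ1 ϑ).hasDerivWithinAt) fun ϑ _ => ?_
  have hspread := abs_sum_mul_div_sum_sub_le (w := isoelasticWeight p q γ p ϑ)
    (w' := isoelasticWeight p q γ q ϑ) (fun k => (isoelasticWeight_pos hp hq hp ϑ k).le)
    (fun k => (isoelasticWeight_pos hp hq hq ϑ k).le) (sum_isoelasticWeight_pos hp hq hp ϑ)
    (sum_isoelasticWeight_pos hp hq hq ϑ) (isoelasticMixDeriv_div_sub_le hp hq hγ hΛ ϑ)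
  rw [← NNReal.coe_le_coe, coe_nnnorm, Real.norm_eq_abs, Real.coe_toNNReal', abs_mul,
    abs_of_pos hγ]
  refine le_max_of_le_left ?_
  calc γ * |isoelasticMeanLogDeriv p q γ p ϑ - isoelasticMeanLogDeriv p q γ q ϑ|
      ≤ γ * ((1 - exp (-Λ / γ)) / (1 + exp (-Λ / γ)) / γ) := by gcongr; exact hspread
    _ = _ := by field_simp

end IsoelasticGame

theorem stmt_18_general {ι : Type*} [Fintype ι] [Nonempty ι] (p q : ι → ℝ)
    (hp : ∀ k, 0 < p k) (hq : ∀ k, 0 < q k)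
    (γ : ℝ) (hγ : 0 < γ) (hγ1 : γ ≠ 1)
    (Λ : ℝ)
    (hΛ : Λ = Finset.univ.sup' Finset.univ_nonempty
      (fun kl : ι × ι => |(1/2) * Real.log ((p kl.1 * q kl.2) / (p kl.2 * q kl.1))|))
    (Φ : ℝ → ℝ)
    (hΦ : ∀ ϑ : ℝ, Φ ϑ = -(γ / (1 - γ)) * Real.log
      ((∑ k, (p k) ^ (1/γ) *
          (Real.exp (ϑ / (2 * γ)) * (p k) ^ (1/γ)
            + Real.exp (-ϑ / (2 * γ)) * (q k) ^ (1/γ)) ^ (γ - 1)) /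
       (∑ k, (q k) ^ (1/γ) *
          (Real.exp (ϑ / (2 * γ)) * (p k) ^ (1/γ)
            + Real.exp (-ϑ / (2 * γ)) * (q k) ^ (1/γ)) ^ (γ - 1)))) :
    (∀ x y : ℝ, |Φ x - Φ y|
      ≤ ((1 - Real.exp (-Λ / γ)) / (1 + Real.exp (-Λ / γ))) * |x - y|) ∧
    ((1 - Real.exp (-Λ / γ)) / (1 + Real.exp (-Λ / γ))) < 1 ∧
    (∃! ϑstar : ℝ, Φ ϑstar = ϑstar) := by
  have hΛle : ∀ k l, (1/2) * log (p k * q l / (p l * q k)) ≤ Λ := fun k l =>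
    hΛ ▸ (le_abs_self _).trans (le_sup' (fun kl : ι × ι =>
      |(1/2) * log ((p kl.1 * q kl.2) / (p kl.2 * q kl.1))|) (mem_univ (k, l)))
  obtain ⟨k₀⟩ := ‹Nonempty ι›
  have hρ0 := exp_pos (-Λ / γ)
  have hρ1 := exp_neg_div_le_one_of_half_log_ratio_le hp hq hγ hΛle k₀
  have hK0 : 0 ≤ (1 - exp (-Λ / γ)) / (1 + exp (-Λ / γ)) := by
    apply div_nonneg <;> linarith
  have hK1 : (1 - exp (-Λ / γ)) / (1 + exp (-Λ / γ)) < 1 := by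
    rw [div_lt_one (by linarith)]; linarith
  obtain rfl : Φ = equilibriumMap p q γ := funext hΦ
  have hLip := lipschitzWith_equilibriumMap hp hq hγ hγ1 hΛle
  have hC : ContractingWith _ (equilibriumMap p q γ) := ⟨Real.toNNReal_lt_one.2 hK1, hLip⟩
  refine ⟨fun x y => ?_, hK1, ⟨_, hC.fixedPoint_isFixedPt, fun y hy => hC.fixedPoint_unique hy⟩⟩
  simpa only [Real.dist_eq, Real.coe_toNNReal _ hK0] using hLip.dist_le_mul x y

/-- The equilibrium map `Φ` of a general isoelastic Statistical game with everywhere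
positive observation distributions `p`, `q` is a contraction with Lipschitz constant
`(1 − e^{−Λ̄/γ})/(1 + e^{−Λ̄/γ}) < 1`, where
`Λ̄ = max_{k,ℓ} |(1/2)·log((p_k·q_ℓ)/(p_ℓ·q_k))|`, and hence has a unique fixed point. -/
theorem stmt_18 {ι : Type*} [Fintype ι] [Nonempty ι] (p q : ι → ℝ)
    (hp : ∀ k, 0 < p k) (hq : ∀ k, 0 < q k)
    (hps : (∑ k, p k) = 1) (hqs : (∑ k, q k) = 1)
    (γ : ℝ) (hγ : 0 < γ) (hγ1 : γ ≠ 1)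
    (Λ : ℝ)
    (hΛ : Λ = Finset.univ.sup' Finset.univ_nonempty
      (fun kl : ι × ι => |(1/2) * Real.log ((p kl.1 * q kl.2) / (p kl.2 * q kl.1))|))
    (Φ : ℝ → ℝ)
    (hΦ : ∀ ϑ : ℝ, Φ ϑ = -(γ / (1 - γ)) * Real.log
      ((∑ k, (p k) ^ (1/γ) *
          (Real.exp (ϑ / (2 * γ)) * (p k) ^ (1/γ)
            + Real.exp (-ϑ / (2 * γ)) * (q k) ^ (1/γ)) ^ (γ - 1)) /
       (∑ k, (q k) ^ (1/γ) *
          (Real.exp (ϑ / (2 * γ)) * (p k) ^ (1/γ)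
            + Real.exp (-ϑ / (2 * γ)) * (q k) ^ (1/γ)) ^ (γ - 1)))) :
    (∀ x y : ℝ, |Φ x - Φ y|
      ≤ ((1 - Real.exp (-Λ / γ)) / (1 + Real.exp (-Λ / γ))) * |x - y|) ∧
    ((1 - Real.exp (-Λ / γ)) / (1 + Real.exp (-Λ / γ))) < 1 ∧
    (∃! ϑstar : ℝ, Φ ϑstar = ϑstar) :=
  stmt_18_general p q hp hq γ hγ hγ1 Λ hΛ Φ hΦ
end

section
/- Fix N ∈ ℕ and x_A, x_B ∈ (0,1). Let (M_i), (K_{A,i}), (K_{B,i}) be sequences of naturals with K_{A,i} ≤ M_i, K_{B,i} ≤ M_i, M_i → ∞, (K_{A,i}:ℝ)/M_i → x_A and (K_{B,i}:ℝ)/M_i → x_B. For each i let ΔG_i(P) = Σ_{k=0}^{N} [ P·p^i_k(A)·log(P·p^i_k(A)/(P·p^i_k(A)+(1−P)·p^i_k(B))) + (1−P)·p^i_k(B)·log((1−P)·p^i_k(B)/(P·p^i_k(A)+(1−P)·p^i_k(B))) ] built from the hypergeometric weights p^i_k(θ) = (C(K_{θ,i},k)·C(M_i−K_{θ,i}, N−k))/C(M_i,N)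 (summands with vanishing leading factor read as 0), and let ΔG_bin(P) be the analogous function built from the binomial weights p_k(θ) = C(N,k)·x_θ^k·(1−x_θ)^{N−k}. Then ΔG_bin has a unique minimizer P* ∈ (0,1); for all sufficiently large i, ΔG_i has a unique minimizer P_i ∈ (0,1); and P_i → P* as i → ∞. -/
open Filter

/-- Hypergeometric weight: probability of `k` ones in a uniform `N`-sample from a
length-`M` binary sequence with `K` ones. -/
noncomputable def hypWeight (M K N k : ℕ) : ℝ :=
  ((K.choose k : ℝ) * ((M - K).choose (N - k) : ℝ)) / (M.choose N : ℝ)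

/-- Binomial weight: probability that a `Binomial(N,x)` variable equals `k`. -/
noncomputable def binWeight (N : ℕ) (x : ℝ) (k : ℕ) : ℝ :=
  (N.choose k : ℝ) * x ^ k * (1 - x) ^ (N - k)

/-- The growth-rate difference of the Bayesian game built from the weight vectors
`pA`, `pB` (summands with vanishing leading factor are `0` automatically). -/
noncomputable def DeltaG (N : ℕ) (pA pB : ℕ → ℝ) (P : ℝ) : ℝ :=
  ∑ k ∈ Finset.range (N + 1),
    (P * pA k * Real.log (P * pA k / (P * pA k + (1 - P) * pB k))
      + (1 - P) * pB k * Real.log ((1 - P) * pB k / (P * pA k + (1 - P) * pB k)))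

/-- `P` is the unique (strict) minimizer of `f` on `(0,1)`. -/
def IsUniqueArgminOnIoo (f : ℝ → ℝ) (P : ℝ) : Prop :=
  P ∈ Set.Ioo (0:ℝ) 1 ∧ ∀ Q ∈ Set.Ioo (0:ℝ) 1, Q ≠ P → f P < f Q

/-!
For positive weight vectors `a`, `b`, the derivative of `DeltaG` on `(0,1)` is `DeltaGDeriv`,
`φ(P) = ∑ₖ (aₖ log (P aₖ) - bₖ log ((1-P) bₖ) - (aₖ - bₖ) log (P aₖ + (1-P) bₖ))`.
Its own derivative `∑ₖ aₖ bₖ / (P (1-P) (P aₖ + (1-P) bₖ))` is positive, and `φ` behaves like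
`(∑ a) log P` near `0` and like `-(∑ b) log (1-P)` near `1`; so `φ` has exactly one zero, and that
zero is the unique minimizer of `DeltaG`. Since `n.descFactorial r ~ n ^ r`, the hypergeometric
weights converge to the binomial ones, so they are eventually positive and their `φ` converge
pointwise. Zeros of strictly increasing functions converge to the zero of a strictly increasing
pointwise limit.
-/

open Set Real Topology Asymptotics

theorem tendsto_of_strictMonoOn_of_apply_eq_zero {ι : Type*} {l : Filter ι} {f : ι → ℝ → ℝ}
    {g : ℝ → ℝ} {s : Set ℝ} {p : ℝ} {q : ι → ℝ} (hs : s ∈ 𝓝 p) (hg : StrictMonoOn g s)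
    (hgp : g p = 0) (hf : ∀ᶠ i in l, StrictMonoOn (f i) s ∧ q i ∈ s ∧ f i (q i) = 0)
    (hfg : ∀ x ∈ s, Tendsto (fun i => f i x) l (𝓝 (g x))) : Tendsto q l (𝓝 p) := by
  have hps : p ∈ s := mem_of_mem_nhds hs
  refine tendsto_order.2 ⟨fun c hc => ?_, fun c hc => ?_⟩
  · obtain ⟨u, hus, hcu, hup⟩ :=
      Filter.nonempty_of_mem (inter_mem (mem_nhdsWithin_of_mem_nhds hs) (Ioo_mem_nhdsLT hc))
    have hgu : g u < 0 := hgp ▸ hg hus hps hup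
    filter_upwards [hf, (hfg u hus).eventually (gt_mem_nhds hgu)] with i ⟨hfi, hqs, hq0⟩ hfu
    exact hcu.trans ((hfi.lt_iff_lt hus hqs).1 (hq0 ▸ hfu))
  · obtain ⟨v, hvs, hpv, hvc⟩ :=
      Filter.nonempty_of_mem (inter_mem (mem_nhdsWithin_of_mem_nhds hs) (Ioo_mem_nhdsGT hc))
    have hgv : 0 < g v := hgp ▸ hg hps hvs hpv
    filter_upwards [hf, (hfg v hvs).eventually (lt_mem_nhds hgv)] with i ⟨hfi, hqs, hq0⟩ hfv
    exact ((hfi.lt_iff_lt hqs hvs).1 (hq0 ▸ hfv)).trans hvc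

theorem isUniqueArgminOnIoo_of_hasDerivAt {f f' : ℝ → ℝ} {p : ℝ}
    (hf : ∀ x ∈ Ioo (0:ℝ) 1, HasDerivAt f (f' x) x) (hf' : StrictMonoOn f' (Ioo 0 1))
    (hp : p ∈ Ioo (0:ℝ) 1) (hp0 : f' p = 0) : IsUniqueArgminOnIoo f p := by
  have hcont : ContinuousOn f (Ioo 0 1) := fun x hx => (hf x hx).continuousAt.continuousWithinAt
  have hanti : StrictAntiOn f (Ioc 0 p) := by
    refine strictAntiOn_of_deriv_neg (convex_Ioc 0 p) (hcont.mono (Ioc_subset_Ioo_right hp.2))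
      fun x hx => ?_
    rw [interior_Ioc] at hx
    have hx' : x ∈ Ioo (0:ℝ) 1 := ⟨hx.1, hx.2.trans hp.2⟩
    rw [(hf x hx').deriv, ← hp0]
    exact hf' hx' hp hx.2
  have hmono : StrictMonoOn f (Ico p 1) := by
    refine strictMonoOn_of_deriv_pos (convex_Ico p 1) (hcont.mono (Ico_subset_Ioo_left hp.1))
      fun x hx => ?_
    rw [interior_Ico] at hx
    have hx' : x ∈ Ioo (0:ℝ) 1 := ⟨hp.1.trans hx.1, hx.2⟩
    rw [(hf x hx').deriv, ← hp0]
    exact hf' hp hx' hx.1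
  refine ⟨hp, fun Q hQ hQp => hQp.lt_or_gt.elim (fun h => ?_) (fun h => ?_)⟩
  · exact hanti ⟨hQ.1, h.le⟩ ⟨hp.1, le_rfl⟩ h
  · exact hmono ⟨le_rfl, hp.2⟩ ⟨h.le, hQ.2⟩ h

noncomputable def DeltaGDeriv (N : ℕ) (pA pB : ℕ → ℝ) (P : ℝ) : ℝ :=
  ∑ k ∈ Finset.range (N + 1),
    (pA k * log (P * pA k) - pB k * log ((1 - P) * pB k)
      - (pA k - pB k) * log (P * pA k + (1 - P) * pB k))

section Summand

variable {a b P : ℝ}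

theorem mul_add_one_sub_mul_pos (ha : 0 < a) (hb : 0 < b) (hP : P ∈ Icc (0:ℝ) 1) :
    0 < P * a + (1 - P) * b := by
  rcases hP.1.eq_or_lt with rfl | hP0
  · simpa using hb
  · exact add_pos_of_pos_of_nonneg (mul_pos hP0 ha) (mul_nonneg (sub_nonneg.2 hP.2) hb.le)

theorem mul_log_div_add_mul_log_div {x y : ℝ} (hx : 0 < x) (hy : 0 < y) :
    x * log (x / (x + y)) + y * log (y / (x + y)) =
      x * log x + y * log y - (x + y) * log (x + y) := by
  rw [log_div hx.ne' (by positivity), log_div hy.ne' (by positivity)]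
  ring

theorem hasDerivAt_DeltaG_summand (ha : 0 < a) (hb : 0 < b) (hP : P ∈ Ioo (0:ℝ) 1) :
    HasDerivAt (fun Q => Q * a * log (Q * a / (Q * a + (1 - Q) * b))
        + (1 - Q) * b * log ((1 - Q) * b / (Q * a + (1 - Q) * b)))
      (a * log (P * a) - b * log ((1 - P) * b) - (a - b) * log (P * a + (1 - P) * b)) P := by
  have hx : HasDerivAt (fun Q => Q * a) a P := by simpa using (hasDerivAt_id P).mul_const a
  have hy : HasDerivAt (fun Q => (1 - Q) * b) (-b) P := by
    simpa using ((hasDerivAt_id P).const_sub 1).mul_const b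
  have hxlogx := (hasDerivAt_mul_log (mul_pos hP.1 ha).ne').comp P hx
  have hylogy := (hasDerivAt_mul_log (mul_pos (sub_pos.2 hP.2) hb).ne').comp P hy
  have hmlogm := (hasDerivAt_mul_log
    (mul_add_one_sub_mul_pos ha hb (Ioo_subset_Icc_self hP)).ne').comp P (hx.fun_add hy)
  refine ((hxlogx.add hylogy).sub hmlogm).congr_deriv (by ring) |>.congr_of_eventuallyEq ?_
  filter_upwards [isOpen_Ioo.mem_nhds hP] with Q hQ
  exact mul_log_div_add_mul_log_div (mul_pos hQ.1 ha) (mul_pos (sub_pos.2 hQ.2) hb)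

theorem hasDerivAt_DeltaGDeriv_summand (ha : 0 < a) (hb : 0 < b) (hP : P ∈ Ioo (0:ℝ) 1) :
    HasDerivAt (fun Q => a * log (Q * a) - b * log ((1 - Q) * b)
        - (a - b) * log (Q * a + (1 - Q) * b))
      (a * b / (P * (1 - P) * (P * a + (1 - P) * b))) P := by
  have hx : HasDerivAt (fun Q => Q * a) a P := by simpa using (hasDerivAt_id P).mul_const a
  have hy : HasDerivAt (fun Q => (1 - Q) * b) (-b) P := by
    simpa using ((hasDerivAt_id P).const_sub 1).mul_const b
  have hPa : P * a ≠ 0 := (mul_pos hP.1 ha).ne'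
  have hPb : (1 - P) * b ≠ 0 := (mul_pos (sub_pos.2 hP.2) hb).ne'
  have hm : P * a + (1 - P) * b ≠ 0 := (mul_add_one_sub_mul_pos ha hb (Ioo_subset_Icc_self hP)).ne'
  refine ((((hx.log hPa).const_mul a).sub ((hy.log hPb).const_mul b)).sub
    (((hx.fun_add hy).log hm).const_mul (a - b))).congr_deriv ?_
  have hP0 : P ≠ 0 := hP.1.ne'
  have hP1 : 1 - P ≠ 0 := (sub_pos.2 hP.2).ne'
  generalize hmdef : P * a + (1 - P) * b = m at hm ⊢
  field_simp
  linear_combination (-(a * (1 - P) + b * P)) * hmdef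

end Summand

section Sums

variable {N : ℕ} {a b : ℕ → ℝ}

theorem tendsto_DeltaGDeriv {ι : Type*} {l : Filter ι} {ai bi : ι → ℕ → ℝ}
    (ha : ∀ k ∈ Finset.range (N + 1), 0 < a k) (hb : ∀ k ∈ Finset.range (N + 1), 0 < b k)
    (hai : ∀ k ∈ Finset.range (N + 1), Tendsto (fun i => ai i k) l (𝓝 (a k)))
    (hbi : ∀ k ∈ Finset.range (N + 1), Tendsto (fun i => bi i k) l (𝓝 (b k)))
    {P : ℝ} (hP : P ∈ Ioo (0:ℝ) 1) :
    Tendsto (fun i => DeltaGDeriv N (ai i) (bi i) P) l (𝓝 (DeltaGDeriv N a b P)) := by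
  refine tendsto_finsetSum _ fun k hk => ?_
  have hx := (hai k hk).const_mul P
  have hy := (hbi k hk).const_mul (1 - P)
  have hPa := mul_pos hP.1 (ha k hk)
  have hPb := mul_pos (sub_pos.2 hP.2) (hb k hk)
  exact (((hai k hk).mul (hx.log hPa.ne')).sub ((hbi k hk).mul (hy.log hPb.ne'))).sub
    (((hai k hk).sub (hbi k hk)).mul ((hx.add hy).log (add_pos hPa hPb).ne'))

variable (ha : ∀ k ∈ Finset.range (N + 1), 0 < a k) (hb : ∀ k ∈ Finset.range (N + 1), 0 < b k)
include ha hb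

theorem hasDerivAt_DeltaG {P : ℝ} (hP : P ∈ Ioo (0:ℝ) 1) :
    HasDerivAt (DeltaG N a b) (DeltaGDeriv N a b P) P :=
  HasDerivAt.fun_sum fun k hk => hasDerivAt_DeltaG_summand (ha k hk) (hb k hk) hP

theorem hasDerivAt_DeltaGDeriv {P : ℝ} (hP : P ∈ Ioo (0:ℝ) 1) :
    HasDerivAt (DeltaGDeriv N a b)
      (∑ k ∈ Finset.range (N + 1), a k * b k / (P * (1 - P) * (P * a k + (1 - P) * b k))) P :=
  HasDerivAt.fun_sum fun k hk => hasDerivAt_DeltaGDeriv_summand (ha k hk) (hb k hk) hP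

theorem continuousOn_DeltaGDeriv : ContinuousOn (DeltaGDeriv N a b) (Ioo 0 1) :=
  fun _ hP => (hasDerivAt_DeltaGDeriv ha hb hP).continuousAt.continuousWithinAt

theorem strictMonoOn_DeltaGDeriv : StrictMonoOn (DeltaGDeriv N a b) (Ioo 0 1) := by
  refine strictMonoOn_of_deriv_pos (convex_Ioo 0 1) (continuousOn_DeltaGDeriv ha hb)
    fun P hP => ?_
  rw [interior_Ioo] at hP
  rw [(hasDerivAt_DeltaGDeriv ha hb hP).deriv]
  refine Finset.sum_pos (fun k hk => ?_) Finset.nonempty_range_add_one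
  exact div_pos (mul_pos (ha k hk) (hb k hk)) (mul_pos (mul_pos hP.1 (sub_pos.2 hP.2))
    (mul_add_one_sub_mul_pos (ha k hk) (hb k hk) (Ioo_subset_Icc_self hP)))

theorem exists_DeltaGDeriv_eq_log_add :
    ∃ R : ℝ → ℝ, (∀ P ∈ Icc (0:ℝ) 1, ContinuousAt R P) ∧ ∀ P ∈ Ioo (0:ℝ) 1,
      DeltaGDeriv N a b P = (∑ k ∈ Finset.range (N + 1), a k) * log P
        - (∑ k ∈ Finset.range (N + 1), b k) * log (1 - P) + R P := by
  refine ⟨fun P => ∑ k ∈ Finset.range (N + 1), (a k * log (a k) - b k * log (b k)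
      - (a k - b k) * log (P * a k + (1 - P) * b k)), fun P hP => ?_, fun P hP => ?_⟩
  · refine tendsto_finsetSum _ fun k hk => continuousAt_const.sub
      (continuousAt_const.mul (ContinuousAt.log (by fun_prop) ?_))
    exact (mul_add_one_sub_mul_pos (ha k hk) (hb k hk) hP).ne'
  · simp only [DeltaGDeriv, Finset.sum_mul, ← Finset.sum_sub_distrib, ← Finset.sum_add_distrib]
    refine Finset.sum_congr rfl fun k hk => ?_
    rw [log_mul hP.1.ne' (ha k hk).ne', log_mul (sub_pos.2 hP.2).ne' (hb k hk).ne']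
    ring

theorem tendsto_DeltaGDeriv_nhdsGT_zero : Tendsto (DeltaGDeriv N a b) (𝓝[>] 0) atBot := by
  obtain ⟨R, hR, hDeltaGDeriv⟩ := exists_DeltaGDeriv_eq_log_add ha hb
  have hA : 0 < ∑ k ∈ Finset.range (N + 1), a k := Finset.sum_pos ha Finset.nonempty_range_add_one
  have hrest : ContinuousAt (fun P => -(∑ k ∈ Finset.range (N + 1), b k) * log (1 - P) + R P) 0 :=
    (continuousAt_const.mul ((continuousAt_const.sub continuousAt_id).log (by norm_num))).add
      (hR 0 ⟨le_rfl, zero_le_one⟩)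
  refine ((tendsto_log_nhdsGT_zero.const_mul_atBot hA).atBot_add
    (hrest.tendsto.mono_left nhdsWithin_le_nhds)).congr' ?_
  filter_upwards [Ioo_mem_nhdsGT one_pos] with P hP
  rw [hDeltaGDeriv P hP]
  ring

theorem tendsto_DeltaGDeriv_nhdsLT_one : Tendsto (DeltaGDeriv N a b) (𝓝[<] 1) atTop := by
  obtain ⟨R, hR, hDeltaGDeriv⟩ := exists_DeltaGDeriv_eq_log_add ha hb
  have hB : 0 < ∑ k ∈ Finset.range (N + 1), b k := Finset.sum_pos hb Finset.nonempty_range_add_one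
  have hrest : ContinuousAt (fun P => (∑ k ∈ Finset.range (N + 1), a k) * log P + R P) 1 :=
    (continuousAt_const.mul (continuousAt_id.log one_ne_zero)).add (hR 1 ⟨zero_le_one, le_rfl⟩)
  have hone_sub : Tendsto (fun P : ℝ => 1 - P) (𝓝[<] 1) (𝓝[>] 0) := by
    refine tendsto_nhdsWithin_iff.2
      ⟨?_, eventually_nhdsWithin_of_forall fun P (hP : P < 1) => sub_pos.2 hP⟩
    simpa using ((continuous_sub_left (1:ℝ)).tendsto 1).mono_left nhdsWithin_le_nhds
  refine (((tendsto_log_nhdsGT_zero.comp hone_sub).const_mul_atBot_of_neg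
    (neg_lt_zero.2 hB)).atTop_add
    (hrest.tendsto.mono_left nhdsWithin_le_nhds)).congr' ?_
  filter_upwards [Ioo_mem_nhdsLT one_pos] with P hP
  rw [hDeltaGDeriv P hP, Function.comp_apply]
  ring

theorem exists_DeltaGDeriv_eq_zero : ∃ p ∈ Ioo (0:ℝ) 1, DeltaGDeriv N a b p = 0 :=
  (continuousOn_DeltaGDeriv ha hb).surjOn_of_tendsto (nonempty_Ioo.2 one_pos)
    ((tendsto_comp_coe_Ioo_atBot one_pos).2 (tendsto_DeltaGDeriv_nhdsGT_zero ha hb))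
    ((tendsto_comp_coe_Ioo_atTop one_pos).2 (tendsto_DeltaGDeriv_nhdsLT_one ha hb)) (mem_univ 0)

theorem exists_isUniqueArgminOnIoo_DeltaG :
    ∃ p, IsUniqueArgminOnIoo (DeltaG N a b) p ∧ DeltaGDeriv N a b p = 0 := by
  obtain ⟨p, hp, hp0⟩ := exists_DeltaGDeriv_eq_zero ha hb
  exact ⟨p, isUniqueArgminOnIoo_of_hasDerivAt (fun _ hx => hasDerivAt_DeltaG ha hb hx)
    (strictMonoOn_DeltaGDeriv ha hb) hp hp0, hp0⟩

end Sums

theorem binWeight_pos {N k : ℕ} {x : ℝ} (hk : k ≤ N) (hx : x ∈ Ioo (0:ℝ) 1) :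
    0 < binWeight N x k :=
  mul_pos (mul_pos (Nat.cast_pos.2 (Nat.choose_pos hk)) (pow_pos hx.1 k))
    (pow_pos (sub_pos.2 hx.2) _)

theorem hypWeight_eq_descFactorial {M K N k : ℕ} (hk : k ≤ N) :
    hypWeight M K N k = N.choose k *
      ((K.descFactorial k * (M - K).descFactorial (N - k) : ℕ) : ℝ) / M.descFactorial N := by
  have hN : (N.choose k * k.factorial * (N - k).factorial : ℝ) = N.factorial := by
    exact_mod_cast Nat.choose_mul_factorial_mul_factorial hk
  simp only [hypWeight, Nat.descFactorial_eq_factorial_mul_choose, Nat.cast_mul]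
  have hc : (N.choose k * k.factorial * (N - k).factorial : ℝ) ≠ 0 := hN ▸ by positivity
  rw [← hN, ← mul_div_mul_left _ (M.choose N : ℝ) hc]
  ring

section Limits

variable {ι : Type*} {l : Filter ι}

theorem tendsto_atTop_of_tendsto_div {n M : ι → ℕ} {x : ℝ} (hM : Tendsto M l atTop)
    (hx : 0 < x) (h : Tendsto (fun i => (n i : ℝ) / M i) l (𝓝 x)) : Tendsto n l atTop := by
  refine tendsto_natCast_atTop_iff.1
    ((h.pos_mul_atTop hx (tendsto_natCast_atTop_atTop.comp hM)).congr' ?_)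
  filter_upwards [hM.eventually_gt_atTop 0] with i hi
  have : (M i : ℝ) ≠ 0 := by positivity
  simp [field]

theorem tendsto_descFactorial_div_pow {n M : ι → ℕ} {x : ℝ} (r : ℕ) (hM : Tendsto M l atTop)
    (hx : 0 < x) (h : Tendsto (fun i => (n i : ℝ) / M i) l (𝓝 x)) :
    Tendsto (fun i => ((n i).descFactorial r : ℝ) / (M i : ℝ) ^ r) l (𝓝 (x ^ r)) := by
  have hequiv := ((isEquivalent_descFactorial r).comp_tendsto
    (tendsto_atTop_of_tendsto_div hM hx h)).div (IsEquivalent.refl (u := fun i => (M i : ℝ) ^ r))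
  exact hequiv.symm.tendsto_nhds ((h.pow r).congr fun i => by simp [div_pow])

theorem tendsto_hypWeight {M K : ι → ℕ} {N k : ℕ} {x : ℝ} (hk : k ≤ N) (hx : x ∈ Ioo (0:ℝ) 1)
    (hKM : ∀ i, K i ≤ M i) (hM : Tendsto M l atTop)
    (hK : Tendsto (fun i => (K i : ℝ) / M i) l (𝓝 x)) :
    Tendsto (fun i => hypWeight (M i) (K i) N k) l (𝓝 (binWeight N x k)) := by
  have hM0 : ∀ᶠ i in l, (M i : ℝ) ≠ 0 := by
    filter_upwards [hM.eventually_gt_atTop 0] with i hi using by positivity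
  have hMK : Tendsto (fun i => ((M i - K i : ℕ) : ℝ) / M i) l (𝓝 (1 - x)) := by
    refine (tendsto_const_nhds.sub hK).congr' ?_
    filter_upwards [hM0] with i hi
    rw [Nat.cast_sub (hKM i), sub_div, div_self hi]
  have hMM : Tendsto (fun i => (M i : ℝ) / M i) l (𝓝 1) :=
    tendsto_const_nhds.congr' (by filter_upwards [hM0] with i hi using (div_self hi).symm)
  have hlim := (((tendsto_descFactorial_div_pow k hM hx.1 hK).mul
    (tendsto_descFactorial_div_pow (N - k) hM (sub_pos.2 hx.2) hMK)).const_mul (N.choose k : ℝ)).div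
    (tendsto_descFactorial_div_pow N hM one_pos hMM) (by norm_num)
  rw [one_pow, div_one, ← mul_assoc] at hlim
  refine hlim.congr' ?_
  filter_upwards [hM0] with i hi
  rw [Pi.div_apply, hypWeight_eq_descFactorial hk, div_mul_div_comm, ← pow_add,
    Nat.add_sub_cancel' hk, mul_div_assoc', div_div_div_cancel_right₀ (pow_ne_zero N hi),
    Nat.cast_mul]

theorem eventually_hypWeight_pos {M K : ι → ℕ} {N : ℕ} {x : ℝ} (hx : x ∈ Ioo (0:ℝ) 1)
    (hKM : ∀ i, K i ≤ M i) (hM : Tendsto M l atTop)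
    (hK : Tendsto (fun i => (K i : ℝ) / M i) l (𝓝 x)) :
    ∀ᶠ i in l, ∀ k ∈ Finset.range (N + 1), 0 < hypWeight (M i) (K i) N k :=
  (eventually_all_finset _).2 fun _ hk =>
    (tendsto_hypWeight (Finset.mem_range_succ_iff.1 hk) hx hKM hM hK).eventually
      (lt_mem_nhds (binWeight_pos (Finset.mem_range_succ_iff.1 hk) hx))

end Limits

/-- Convergence of the equilibrium priors of the finite Bayesian games
`𝔅𝔊(N,K_{A,i},K_{B,i},M_i)` to the equilibrium prior of the Binomial Bayesian game:
the binomial growth-rate difference has a unique minimizer `P* ∈ (0,1)`, the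
hypergeometric ones eventually have unique minimizers `P_i ∈ (0,1)`, and `P_i → P*`. -/
theorem stmt_19 (N : ℕ) (xA xB : ℝ)
    (hA : xA ∈ Set.Ioo (0:ℝ) 1) (hB : xB ∈ Set.Ioo (0:ℝ) 1)
    (M KA KB : ℕ → ℕ) (hKA : ∀ i, KA i ≤ M i) (hKB : ∀ i, KB i ≤ M i)
    (hM : Tendsto M atTop atTop)
    (hxA : Tendsto (fun i => (KA i : ℝ) / (M i : ℝ)) atTop (nhds xA))
    (hxB : Tendsto (fun i => (KB i : ℝ) / (M i : ℝ)) atTop (nhds xB)) :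
    ∃ Pstar : ℝ,
      IsUniqueArgminOnIoo (DeltaG N (binWeight N xA) (binWeight N xB)) Pstar ∧
      ∃ Pseq : ℕ → ℝ,
        (∀ᶠ i in atTop,
          IsUniqueArgminOnIoo
            (DeltaG N (hypWeight (M i) (KA i) N) (hypWeight (M i) (KB i) N)) (Pseq i)) ∧
        Tendsto Pseq atTop (nhds Pstar) := by
  have hbinA : ∀ k ∈ Finset.range (N + 1), 0 < binWeight N xA k :=
    fun k hk => binWeight_pos (Finset.mem_range_succ_iff.1 hk) hA
  have hbinB : ∀ k ∈ Finset.range (N + 1), 0 < binWeight N xB k :=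
    fun k hk => binWeight_pos (Finset.mem_range_succ_iff.1 hk) hB
  have htA : ∀ k ∈ Finset.range (N + 1), Tendsto (fun i => hypWeight (M i) (KA i) N k) atTop
      (𝓝 (binWeight N xA k)) :=
    fun k hk => tendsto_hypWeight (Finset.mem_range_succ_iff.1 hk) hA hKA hM hxA
  have htB : ∀ k ∈ Finset.range (N + 1), Tendsto (fun i => hypWeight (M i) (KB i) N k) atTop
      (𝓝 (binWeight N xB k)) :=
    fun k hk => tendsto_hypWeight (Finset.mem_range_succ_iff.1 hk) hB hKB hM hxB
  have hhypA := eventually_hypWeight_pos (N := N) hA hKA hM hxA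
  have hhypB := eventually_hypWeight_pos (N := N) hB hKB hM hxB
  obtain ⟨Pstar, hPstar, hPstar0⟩ := exists_isUniqueArgminOnIoo_DeltaG hbinA hbinB
  obtain ⟨Pseq, hPseq⟩ := ((hhypA.and hhypB).mono fun i hi =>
    exists_isUniqueArgminOnIoo_DeltaG hi.1 hi.2).choice
  refine ⟨Pstar, hPstar, Pseq, hPseq.mono fun i hi => hi.1, ?_⟩
  refine tendsto_of_strictMonoOn_of_apply_eq_zero (Ioo_mem_nhds hPstar.1.1 hPstar.1.2)
    (strictMonoOn_DeltaGDeriv hbinA hbinB) hPstar0 ?_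
    fun P hP => tendsto_DeltaGDeriv hbinA hbinB htA htB hP
  filter_upwards [hhypA, hhypB, hPseq] with i hiA hiB hi
  exact ⟨strictMonoOn_DeltaGDeriv hiA hiB, hi.1.1, hi.2⟩
end
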